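/- arXiv:2309.05100 — 5 statements merged into one kernel-verified Lean document; each statement's English description precedes it below -/
import Mathlib

section
/- Let G be a graph and w ≥ 0. If (A,B) is a w-good separation of G and u ∈ A ∩ B has no neighbour in B ∖ A, then (A, B ∖ {u}) is also a w-good separation of G. -/
open Finset

def IsPD {V : Type} [Fintype V] [DecidableEq V] (G : SimpleGraph V) {n : ℕ}
    (W : Fin n → Finset V) : Prop :=
  (∀ v : V, ∃ i, v ∈ W i) ∧
  (∀ u v : V, G.Adj u v → ∃ i, u ∈ W i ∧ v ∈ W i) ∧
  (∀ i j k : Fin n, i ≤ j → j ≤ k → W i ∩ W k ⊆ W j)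

def pwLE {V : Type} [Fintype V] [DecidableEq V] (G : SimpleGraph V) (w : ℕ) : Prop :=
  ∃ (n : ℕ) (W : Fin n → Finset V), IsPD G W ∧ ∀ i, (W i).card ≤ w + 1

def pwLEZ {V : Type} [Fintype V] [DecidableEq V] (G : SimpleGraph V) (z : ℤ) : Prop :=
  ∃ (n : ℕ) (W : Fin n → Finset V), IsPD G W ∧ ∀ i, ((W i).card : ℤ) ≤ z + 1

def IsPDon {V : Type} [DecidableEq V] (G : SimpleGraph V) (A : Finset V) {n : ℕ}
    (W : Fin n → Finset V) : Prop :=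
  (∀ i, W i ⊆ A) ∧ (∀ v ∈ A, ∃ i, v ∈ W i) ∧
  (∀ u v : V, G.Adj u v → u ∈ A → v ∈ A → ∃ i, u ∈ W i ∧ v ∈ W i) ∧
  (∀ i j k : Fin n, i ≤ j → j ≤ k → W i ∩ W k ⊆ W j)

def IsSep {V : Type} [Fintype V] [DecidableEq V] (G : SimpleGraph V) (A B : Finset V) : Prop :=
  A ∪ B = Finset.univ ∧
  ∀ u v : V, u ∈ A → u ∉ B → v ∈ B → v ∉ A → ¬ G.Adj u v

def GoodSep {V : Type} [Fintype V] [DecidableEq V] (G : SimpleGraph V) (w : ℕ)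
    (A B : Finset V) : Prop :=
  IsSep G A B ∧ ∃ (n : ℕ) (W : Fin (n+1) → Finset V), IsPDon G A W ∧
    (∀ i, (W i).card ≤ w + 1) ∧ W (Fin.last n) = A ∩ B

def Extends {V : Type} [DecidableEq V] (A B A' B' : Finset V) : Prop :=
  A ⊆ A' ∧ B' ⊆ B ∧ (A' ∩ B').card ≤ (A ∩ B).card

def MaxGood {V : Type} [Fintype V] [DecidableEq V] (G : SimpleGraph V) (w : ℕ)
    (A B : Finset V) : Prop :=
  GoodSep G w A B ∧
  ∀ A' B' : Finset V, GoodSep G w A' B' → Extends A B A' B' → A' = A ∧ B' = B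

def IsModelOn {W V : Type} (H : SimpleGraph W) (G : SimpleGraph V) (A : Set V)
    (φ : W → Set V) : Prop :=
  (∀ h, φ h ⊆ A) ∧ (∀ h, (φ h).Nonempty) ∧ (∀ h, (G.induce (φ h)).Connected) ∧
  (∀ h h', h ≠ h' → Disjoint (φ h) (φ h')) ∧
  (∀ h h', H.Adj h h' → ∃ u ∈ φ h, ∃ v ∈ φ h', G.Adj u v)

def HasMinor {V W : Type} (G : SimpleGraph V) (H : SimpleGraph W) : Prop :=
  ∃ φ : W → Set V, IsModelOn H G Set.univ φ

def DisjPaths {V : Type} [Fintype V] [DecidableEq V] (G : SimpleGraph V) (t : ℕ)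
    (P S : Finset V) : Prop :=
  ∃ (a b : Fin t → V) (p : ∀ i, G.Walk (a i) (b i)),
    (∀ i, (p i).IsPath) ∧ (∀ i, a i ∈ P) ∧ (∀ i, b i ∈ S) ∧
    ∀ i j, i ≠ j → ∀ v ∈ (p i).support, v ∉ (p j).support

/-- Removing from B a separator vertex with no neighbour in B∖A keeps the separation w-good. -/
theorem stmt_6 {V : Type} [Fintype V] [DecidableEq V] (G : SimpleGraph V) (w : ℕ)
    (A B : Finset V) (h : GoodSep G w A B) (u : V) (hu : u ∈ A ∩ B)
    (hnb : ∀ v ∈ B, v ∉ A → ¬ G.Adj u v) :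
    GoodSep G w A (B.erase u) := by
  obtain ⟨hsep, n, W, ⟨hsub, hcov, hedge, hint⟩, hcard, hlast⟩ := h
  rw [Finset.mem_inter] at hu
  constructor
  · constructor
    · rw [Finset.eq_univ_iff_forall]
      intro v
      rcases Finset.mem_union.1 (hsep.1 ▸ Finset.mem_univ v : v ∈ A ∪ B) with h1 | h2
      · exact Finset.mem_union_left _ h1
      · by_cases hv : v = u
        · exact Finset.mem_union_left _ (hv ▸ hu.1)
        · exact Finset.mem_union_right _ (Finset.mem_erase.2 ⟨hv, h2⟩)
    · intro x y hxA hxB hyB hyA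
      have hyB' := Finset.mem_of_mem_erase hyB
      by_cases hx : x ∈ B
      · have hxu : x = u := by
          by_contra hne
          exact hxB (Finset.mem_erase.2 ⟨hne, hx⟩)
        subst hxu
        exact hnb y hyB' hyA
      · exact hsep.2 x y hxA hx hyB' hyA
  · refine ⟨n+1, Fin.snoc W ((A ∩ B).erase u), ⟨?_, ?_, ?_, ?_⟩, ?_, ?_⟩
    · intro i
      refine Fin.lastCases ?_ ?_ i
      · rw [Fin.snoc_last]
        exact (Finset.erase_subset _ _).trans Finset.inter_subset_left
      · intro i'
        rw [Fin.snoc_castSucc]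
        exact hsub i'
    · intro v hv
      obtain ⟨i, hi⟩ := hcov v hv
      exact ⟨i.castSucc, by rwa [Fin.snoc_castSucc]⟩
    · intro x y hxy hxA hyA
      obtain ⟨i, hi⟩ := hedge x y hxy hxA hyA
      exact ⟨i.castSucc, by rwa [Fin.snoc_castSucc]⟩
    · intro i j k hij hjk x hx
      rcases Fin.eq_castSucc_or_eq_last k with ⟨k', rfl⟩ | rfl
      · have hjlt : j < Fin.last (n+1) := lt_of_le_of_lt hjk (Fin.castSucc_lt_last k')
        have hilt : i < Fin.last (n+1) := lt_of_le_of_lt hij hjlt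
        rcases Fin.eq_castSucc_or_eq_last j with ⟨j', rfl⟩ | rfl
        · rcases Fin.eq_castSucc_or_eq_last i with ⟨i', rfl⟩ | rfl
          · rw [Fin.snoc_castSucc]
            rw [Fin.snoc_castSucc, Fin.snoc_castSucc] at hx
            exact hint i' j' k' (Fin.castSucc_le_castSucc_iff.1 hij)
              (Fin.castSucc_le_castSucc_iff.1 hjk) hx
          · exact absurd rfl hilt.ne
        · exact absurd rfl hjlt.ne
      · rcases Fin.eq_castSucc_or_eq_last j with ⟨j', rfl⟩ | rfl
        · have hilt : i < Fin.last (n+1) :=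
            lt_of_le_of_lt hij (Fin.castSucc_lt_last j')
          rcases Fin.eq_castSucc_or_eq_last i with ⟨i', rfl⟩ | rfl
          · rw [Fin.snoc_castSucc, Fin.snoc_last] at hx
            rw [Fin.snoc_castSucc]
            have hx1 : x ∈ W i' := (Finset.mem_inter.1 hx).1
            have hx2 : x ∈ W (Fin.last n) := by
              rw [hlast]
              exact Finset.mem_of_mem_erase (Finset.mem_inter.1 hx).2
            exact hint i' j' (Fin.last n) (Fin.castSucc_le_castSucc_iff.1 hij)
              (Fin.le_last _) (Finset.mem_inter.2 ⟨hx1, hx2⟩)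
          · exact absurd rfl hilt.ne
        · rw [Fin.snoc_last] at hx ⊢
          exact (Finset.mem_inter.1 hx).2
    · intro i
      refine Fin.lastCases ?_ ?_ i
      · rw [Fin.snoc_last]
        calc ((A ∩ B).erase u).card ≤ (A ∩ B).card := Finset.card_erase_le
          _ = (W (Fin.last n)).card := by rw [hlast]
          _ ≤ w + 1 := hcard _
      · intro i'
        rw [Fin.snoc_castSucc]
        exact hcard i'
    · rw [Fin.snoc_last]
      ext x
      simp only [Finset.mem_erase, Finset.mem_inter]
      tauto
end

section
/- (Extension lemma) Let G be a graph, w ≥ 0, and let (A',B') and (P,Q) be separations of G with (P,Q) ≤ (A',B'), where (A',B') is w-good. If there exist |P ∩ Q| vertex-disjoint paths of G between P and B', then (P,Q) is w-good. -/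
open Finset

namespace Stmt9Aux

variable {V : Type} [DecidableEq V] {G : SimpleGraph V}

/-- Truncate a walk at the last vertex lying in `P`. -/
lemma truncA (P : Finset V) {a b : V} (p : G.Walk a b) (h : ∃ v ∈ p.support, v ∈ P) :
    ∃ (x : V) (q : G.Walk x b), x ∈ P ∧ (∀ v ∈ q.support, v ∈ P → v = x) ∧
      (∀ v ∈ q.support, v ∈ p.support) := by
  induction p with
  | nil =>
    obtain ⟨v, hv, hvP⟩ := h
    simp only [SimpleGraph.Walk.support_nil, List.mem_singleton] at hv
    subst hv
    exact ⟨v, SimpleGraph.Walk.nil, hvP,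
      fun u hu _ => by simpa using hu, fun u hu => hu⟩
  | cons h' p' ih =>
    by_cases hc : ∃ v ∈ p'.support, v ∈ P
    · obtain ⟨x, q, h1, h2, h3⟩ := ih hc
      refine ⟨x, q, h1, h2, fun v hv => ?_⟩
      rw [SimpleGraph.Walk.support_cons]
      exact List.mem_cons_of_mem _ (h3 v hv)
    · obtain ⟨v, hv, hvP⟩ := h
      rw [SimpleGraph.Walk.support_cons, List.mem_cons] at hv
      have hva := hv.resolve_right (fun hmem => hc ⟨v, hmem, hvP⟩)
      subst hva
      refine ⟨v, SimpleGraph.Walk.cons h' p', hvP, fun u hu huP => ?_, fun u hu => hu⟩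
      rw [SimpleGraph.Walk.support_cons, List.mem_cons] at hu
      exact hu.resolve_right (fun hmem => hc ⟨u, hmem, huP⟩)

/-- Truncate a walk starting in `A'` ending in `B'` at the first vertex of `B'`;
the resulting walk stays in `A'`. -/
lemma truncB (A' B' : Finset V)
    (hsep : ∀ u v : V, u ∈ A' → u ∉ B' → v ∈ B' → v ∉ A' → ¬ G.Adj u v)
    (huniv : ∀ v : V, v ∈ A' ∨ v ∈ B') :
    ∀ {a b : V} (p : G.Walk a b), a ∈ A' → b ∈ B' →
    ∃ (y : V) (q : G.Walk a y), y ∈ A' ∧ y ∈ B' ∧ (∀ v ∈ q.support, v ∈ A') ∧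
      (∀ v ∈ q.support, v ∈ p.support) := by
  intro a b p
  induction p with
  | nil =>
    rename_i a0
    intro ha hb
    exact ⟨a0, SimpleGraph.Walk.nil, ha, hb,
      fun v hv => by
        simp only [SimpleGraph.Walk.support_nil, List.mem_singleton] at hv
        exact hv ▸ ha,
      fun v hv => hv⟩
  | cons h' p' ih =>
    rename_i a0 c0 b0
    intro ha hb
    by_cases haB : a0 ∈ B'
    · exact ⟨a0, SimpleGraph.Walk.nil, ha, haB,
        fun v hv => by
          simp only [SimpleGraph.Walk.support_nil, List.mem_singleton] at hv
          exact hv ▸ ha,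
        fun v hv => by
          simp only [SimpleGraph.Walk.support_nil, List.mem_singleton] at hv
          rw [SimpleGraph.Walk.support_cons, hv]
          exact List.mem_cons_self⟩
    · by_cases hcA : c0 ∈ A'
      · obtain ⟨y, q', hy1, hy2, hq1, hq2⟩ := ih hcA hb
        refine ⟨y, SimpleGraph.Walk.cons h' q', hy1, hy2, fun v hv => ?_, fun v hv => ?_⟩
        · rw [SimpleGraph.Walk.support_cons, List.mem_cons] at hv
          rcases hv with rfl | hv
          · exact ha
          · exact hq1 v hv
        · rw [SimpleGraph.Walk.support_cons, List.mem_cons] at hv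
          rw [SimpleGraph.Walk.support_cons, List.mem_cons]
          rcases hv with rfl | hv
          · exact Or.inl rfl
          · exact Or.inr (hq2 v hv)
      · exact absurd h' (hsep _ _ ha haB ((huniv _).resolve_left hcA) hcA)

/-- The start of a walk whose only `P`-vertex is the start, ending in `Q`,
also lies in `Q` (using the separation property). -/
lemma startQ (P Q : Finset V)
    (hsep : ∀ u v : V, u ∈ P → u ∉ Q → v ∈ Q → v ∉ P → ¬ G.Adj u v)
    (huniv : ∀ v : V, v ∈ P ∨ v ∈ Q)
    {x y : V} (q : G.Walk x y) (hx : x ∈ P) (hy : y ∈ Q)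
    (huniq : ∀ v ∈ q.support, v ∈ P → v = x) : x ∈ Q := by
  cases q with
  | nil => exact hy
  | cons h' r =>
    rename_i c0
    by_contra hxQ
    have hc1 : c0 ∈ (SimpleGraph.Walk.cons h' r).support := by
      rw [SimpleGraph.Walk.support_cons]
      exact List.mem_cons_of_mem _ r.start_mem_support
    have hcP : c0 ∉ P := fun hp => h'.ne ((huniq c0 hc1 hp).symm)
    exact hsep x c0 hx hxQ ((huniv c0).resolve_left hcP) hcP h'

/-- Convexity: the set of bags met by a connected walk inside `A'` is an interval. -/
lemma convex {n : ℕ} {A' : Finset V} {W : Fin n → Finset V}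
    (hWedge : ∀ u v : V, G.Adj u v → u ∈ A' → v ∈ A' → ∃ i, u ∈ W i ∧ v ∈ W i)
    (hWint : ∀ i j k : Fin n, i ≤ j → j ≤ k → W i ∩ W k ⊆ W j)
    {a b : V} (q : G.Walk a b) :
    (∀ v ∈ q.support, v ∈ A') → ∀ i j k : Fin n, i ≤ j → j ≤ k →
    (∃ u ∈ q.support, u ∈ W i) → (∃ u ∈ q.support, u ∈ W k) →
    ∃ v ∈ q.support, v ∈ W j := by
  induction q with
  | nil =>
    rename_i a0
    rintro hA i j k hij hjk ⟨u, hu, hui⟩ ⟨u', hu', huk⟩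
    simp only [SimpleGraph.Walk.support_nil, List.mem_singleton] at hu hu'
    refine ⟨a0, by simp, hWint i j k hij hjk (mem_inter.mpr ⟨hu ▸ hui, hu' ▸ huk⟩)⟩
  | cons h' r ih =>
    rename_i a0 c0 b0
    rintro hA i j k hij hjk ⟨u, hu, hui⟩ ⟨u', hu', huk⟩
    rw [SimpleGraph.Walk.support_cons, List.mem_cons] at hu hu'
    have hstart : a0 ∈ (SimpleGraph.Walk.cons h' r).support := by
      rw [SimpleGraph.Walk.support_cons]; exact List.mem_cons_self
    have hnext : c0 ∈ (SimpleGraph.Walk.cons h' r).support := by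
      rw [SimpleGraph.Walk.support_cons]
      exact List.mem_cons_of_mem _ r.start_mem_support
    have haA : a0 ∈ A' := hA _ hstart
    have hcA : c0 ∈ A' := hA _ hnext
    have hA2 : ∀ v ∈ r.support, v ∈ A' := fun v hv => hA v (by
      rw [SimpleGraph.Walk.support_cons]; exact List.mem_cons_of_mem _ hv)
    have lift : (∃ v ∈ r.support, v ∈ W j) →
        ∃ v ∈ (SimpleGraph.Walk.cons h' r).support, v ∈ W j := by
      rintro ⟨v, hv, hvW⟩
      exact ⟨v, by rw [SimpleGraph.Walk.support_cons]; exact List.mem_cons_of_mem _ hv, hvW⟩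
    rcases hu with hu | hu <;> rcases hu' with hu' | hu'
    · exact ⟨a0, hstart, hWint i j k hij hjk (mem_inter.mpr ⟨hu ▸ hui, hu' ▸ huk⟩)⟩
    · obtain ⟨l, halW, hclW⟩ := hWedge a0 c0 h' haA hcA
      rcases le_total j l with hjl | hlj
      · exact ⟨a0, hstart, hWint i j l hij hjl (mem_inter.mpr ⟨hu ▸ hui, halW⟩)⟩
      · exact lift (ih hA2 l j k hlj hjk ⟨c0, r.start_mem_support, hclW⟩ ⟨u', hu', huk⟩)
    · obtain ⟨l, halW, hclW⟩ := hWedge a0 c0 h' haA hcA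
      rcases le_total j l with hjl | hlj
      · exact lift (ih hA2 i j l hij hjl ⟨u, hu, hui⟩ ⟨c0, r.start_mem_support, hclW⟩)
      · exact ⟨a0, hstart, hWint l j k hlj hjk (mem_inter.mpr ⟨halW, hu' ▸ huk⟩)⟩
    · exact lift (ih hA2 i j k hij hjk ⟨u, hu, hui⟩ ⟨u', hu', huk⟩)

end Stmt9Aux

/-- Extension lemma -/
theorem stmt_9 {V : Type} [Fintype V] [DecidableEq V] (G : SimpleGraph V) (w : ℕ)
    (A' B' P Q : Finset V) (hA' : GoodSep G w A' B') (hPQ : IsSep G P Q)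
    (hle1 : P ⊆ A') (hle2 : B' ⊆ Q)
    (hpaths : DisjPaths G ((P ∩ Q).card) P B') :
    GoodSep G w P Q := by
  classical
  obtain ⟨hsepA, n, W, hPD, hWcard, hWlast⟩ := hA'
  obtain ⟨hWsub, hWcov, hWedge, hWint⟩ := hPD
  obtain ⟨hAuniv, hABsep⟩ := hsepA
  obtain ⟨hPuniv, hPQsep⟩ := hPQ
  have hunivA : ∀ v : V, v ∈ A' ∨ v ∈ B' := fun v =>
    mem_union.mp (hAuniv ▸ mem_univ v : v ∈ A' ∪ B')
  have hunivP : ∀ v : V, v ∈ P ∨ v ∈ Q := fun v =>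
    mem_union.mp (hPuniv ▸ mem_univ v : v ∈ P ∪ Q)
  obtain ⟨pa, pb, pw, hpath, hpaP, hpbB, hpdisj⟩ := hpaths
  -- truncate each path: start at its last P-vertex, end at its first B'-vertex
  have key : ∀ i : Fin (P ∩ Q).card, ∃ (x y : V) (qq : G.Walk x y),
      x ∈ P ∧ x ∈ Q ∧ y ∈ A' ∧ y ∈ B' ∧ (∀ v ∈ qq.support, v ∈ A') ∧
      (∀ v ∈ qq.support, v ∈ P → v = x) ∧ (∀ v ∈ qq.support, v ∈ (pw i).support) := by
    intro i
    obtain ⟨x, q1, hxP, hq1uniq, hq1sub⟩ :=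
      Stmt9Aux.truncA P (pw i) ⟨pa i, (pw i).start_mem_support, hpaP i⟩
    obtain ⟨y, q2, hyA, hyB, hq2A, hq2sub⟩ :=
      Stmt9Aux.truncB A' B' hABsep hunivA q1 (hle1 hxP) (hpbB i)
    have huniq2 : ∀ v ∈ q2.support, v ∈ P → v = x := fun v hv => hq1uniq v (hq2sub v hv)
    have hxQ : x ∈ Q := Stmt9Aux.startQ P Q hPQsep hunivP q2 hxP (hle2 hyB) huniq2
    exact ⟨x, y, q2, hxP, hxQ, hyA, hyB, hq2A, huniq2,
      fun v hv => hq1sub v (hq2sub v hv)⟩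
  choose xx yy qq hxP hxQ hyA hyB hqA hquniq hqsub using key
  have hqdisj : ∀ i j, i ≠ j → ∀ v ∈ (qq i).support, v ∉ (qq j).support :=
    fun i j hij v hv hv' => hpdisj i j hij v (hqsub i v hv) (hqsub j v hv')
  -- the starts form a bijection with P ∩ Q
  let f : Fin (P ∩ Q).card → {v // v ∈ P ∩ Q} :=
    fun i => ⟨xx i, mem_inter.mpr ⟨hxP i, hxQ i⟩⟩
  have finj : Function.Injective f := by
    intro i j hij
    by_contra hne
    have hx : xx i = xx j := congrArg Subtype.val hij
    exact hqdisj i j hne (xx i) (qq i).start_mem_support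
      (by rw [hx]; exact (qq j).start_mem_support)
  have fsurj : Function.Surjective f :=
    ((Fintype.bijective_iff_injective_and_card f).mpr
      ⟨finj, by rw [Fintype.card_fin, Fintype.card_coe]⟩).2
  choose r hr using fsurj
  have hFx : ∀ (v : V) (h : v ∈ P ∩ Q), xx (r ⟨v, h⟩) = v :=
    fun v h => congrArg Subtype.val (hr ⟨v, h⟩)
  -- package the supports of the truncated paths as a family of vertex sets
  obtain ⟨F, hFmem, hFA, hFP, hFE, hFdisj, hFwalk⟩ :
      ∃ F : V → Finset V,
        (∀ v ∈ P ∩ Q, v ∈ F v) ∧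
        (∀ v ∈ P ∩ Q, ∀ u ∈ F v, u ∈ A') ∧
        (∀ v ∈ P ∩ Q, ∀ u ∈ F v, u ∈ P → u = v) ∧
        (∀ v ∈ P ∩ Q, ∃ u ∈ F v, u ∈ A' ∧ u ∈ B') ∧
        (∀ v ∈ P ∩ Q, ∀ v' ∈ P ∩ Q, v ≠ v' → ∀ u ∈ F v, u ∉ F v') ∧
        (∀ v ∈ P ∩ Q, ∃ (c d : V) (qw : G.Walk c d), ∀ u, u ∈ F v ↔ u ∈ qw.support) := by
    refine ⟨fun v => if h : v ∈ P ∩ Q then (qq (r ⟨v, h⟩)).support.toFinset else ∅,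
      ?_, ?_, ?_, ?_, ?_, ?_⟩
    · intro v hv
      simp only [dif_pos hv, List.mem_toFinset]
      exact (SimpleGraph.Walk.mem_support_iff _).mpr (Or.inl (hFx v hv).symm)
    · intro v hv u hu
      simp only [dif_pos hv, List.mem_toFinset] at hu
      exact hqA _ u hu
    · intro v hv u hu huP
      simp only [dif_pos hv, List.mem_toFinset] at hu
      exact (hquniq _ u hu huP).trans (hFx v hv)
    · intro v hv
      refine ⟨yy (r ⟨v, hv⟩), ?_, hyA _, hyB _⟩
      simp only [dif_pos hv, List.mem_toFinset]
      exact (qq (r ⟨v, hv⟩)).end_mem_support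
    · intro v hv v' hv' hne u hu hu'
      simp only [dif_pos hv, List.mem_toFinset] at hu
      simp only [dif_pos hv', List.mem_toFinset] at hu'
      have hrne : r ⟨v, hv⟩ ≠ r ⟨v', hv'⟩ := fun e => hne (by
        rw [← hFx v hv, ← hFx v' hv', e])
      exact hqdisj _ _ hrne u hu hu'
    · intro v hv
      refine ⟨xx (r ⟨v, hv⟩), yy (r ⟨v, hv⟩), qq (r ⟨v, hv⟩), fun u => ?_⟩
      simp only [dif_pos hv, List.mem_toFinset]
  -- the new bags
  obtain ⟨BB, hBB⟩ : ∃ BB : Fin (n + 1) → Finset V, ∀ i v,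
      v ∈ BB i ↔ ((v ∈ W i ∧ v ∈ P) ∨ (v ∈ P ∩ Q ∧ ∃ u ∈ F v, u ∈ W i)) := by
    refine ⟨fun i => (W i ∩ P) ∪ (P ∩ Q).filter (fun v => ∃ u ∈ F v, u ∈ W i), ?_⟩
    intro i v
    simp only [mem_union, mem_inter, mem_filter]
    try tauto
  have hBBP : ∀ i v, v ∈ BB i → v ∈ P := by
    intro i v hv
    rcases (hBB i v).mp hv with ⟨_, h⟩ | ⟨h, _⟩
    · exact h
    · exact (mem_inter.mp h).1
  have hBQ : ∀ (i : Fin (n+1)) (v : V), v ∈ P ∩ Q →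
      (v ∈ BB i ↔ ∃ u ∈ F v, u ∈ W i) := by
    intro i v hv
    constructor
    · intro h
      rcases (hBB i v).mp h with ⟨hW, _⟩ | ⟨_, h'⟩
      · exact ⟨v, hFmem v hv, hW⟩
      · exact h'
    · intro h
      exact (hBB i v).mpr (Or.inr ⟨hv, h⟩)
  have hBnQ : ∀ (i : Fin (n+1)) (v : V), v ∈ P → v ∉ Q →
      (v ∈ BB i ↔ v ∈ W i) := by
    intro i v hvP hvQ
    constructor
    · intro h
      rcases (hBB i v).mp h with ⟨hW, _⟩ | ⟨hPQ', _⟩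
      · exact hW
      · exact absurd (mem_inter.mp hPQ').2 hvQ
    · intro h
      exact (hBB i v).mpr (Or.inl ⟨h, hvP⟩)
  -- interpolation for the new bags
  have hBBint : ∀ i j k : Fin (n + 1), i ≤ j → j ≤ k → BB i ∩ BB k ⊆ BB j := by
    intro i j k hij hjk v hv
    rw [mem_inter] at hv
    have hvP : v ∈ P := hBBP i v hv.1
    by_cases hvQ : v ∈ Q
    · have hvPQ : v ∈ P ∩ Q := mem_inter.mpr ⟨hvP, hvQ⟩
      obtain ⟨u1, hu1F, hu1W⟩ := (hBQ i v hvPQ).mp hv.1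
      obtain ⟨u2, hu2F, hu2W⟩ := (hBQ k v hvPQ).mp hv.2
      obtain ⟨c, d, qw, hiff⟩ := hFwalk v hvPQ
      have hqwA : ∀ u ∈ qw.support, u ∈ A' := fun u hu =>
        hFA v hvPQ u ((hiff u).mpr hu)
      obtain ⟨u, huS, huW⟩ := Stmt9Aux.convex hWedge hWint qw hqwA i j k hij hjk
        ⟨u1, (hiff u1).mp hu1F, hu1W⟩ ⟨u2, (hiff u2).mp hu2F, hu2W⟩
      exact (hBQ j v hvPQ).mpr ⟨u, (hiff u).mpr huS, huW⟩
    · rw [hBnQ j v hvP hvQ]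
      exact hWint i j k hij hjk (mem_inter.mpr
        ⟨(hBnQ i v hvP hvQ).mp hv.1, (hBnQ k v hvP hvQ).mp hv.2⟩)
  -- cardinality of the new bags
  have hBBcard : ∀ i, (BB i).card ≤ (W i).card := by
    intro i
    apply Finset.card_le_card_of_injOn (fun v => if v ∈ W i then v else
      if h : (F v ∩ W i).Nonempty then h.choose else v)
    · intro v hv
      by_cases hvW : v ∈ W i
      · beta_reduce; rw [if_pos hvW]; exact hvW
      · rcases (hBB i v).mp hv with ⟨h1, _⟩ | ⟨hvPQ, u, huF, huW⟩
        · exact absurd h1 hvW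
        have hne : (F v ∩ W i).Nonempty := ⟨u, mem_inter.mpr ⟨huF, huW⟩⟩
        beta_reduce
        rw [if_neg hvW, dif_pos hne]
        exact (mem_inter.mp hne.choose_spec).2
    · intro v1 hv1 v2 hv2 heq
      simp only at heq
      by_cases h1 : v1 ∈ W i <;> by_cases h2 : v2 ∈ W i
      · rwa [if_pos h1, if_pos h2] at heq
      · exfalso
        rcases (hBB i v2).mp hv2 with ⟨hW2, _⟩ | ⟨hPQ2, u, huF, huW⟩
        · exact h2 hW2
        have hne : (F v2 ∩ W i).Nonempty := ⟨u, mem_inter.mpr ⟨huF, huW⟩⟩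
        rw [if_pos h1, if_neg h2, dif_pos hne] at heq
        have hcF : hne.choose ∈ F v2 := (mem_inter.mp hne.choose_spec).1
        have hcP : hne.choose ∈ P := heq ▸ hBBP i v1 hv1
        have hcv : hne.choose = v2 := hFP v2 hPQ2 _ hcF hcP
        exact h2 ((heq.trans hcv) ▸ h1)
      · exfalso
        rcases (hBB i v1).mp hv1 with ⟨hW1, _⟩ | ⟨hPQ1, u, huF, huW⟩
        · exact h1 hW1
        have hne : (F v1 ∩ W i).Nonempty := ⟨u, mem_inter.mpr ⟨huF, huW⟩⟩
        rw [if_neg h1, if_pos h2, dif_pos hne] at heq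
        have hcF : hne.choose ∈ F v1 := (mem_inter.mp hne.choose_spec).1
        have hcP : hne.choose ∈ P := heq ▸ hBBP i v2 hv2
        have hcv : hne.choose = v1 := hFP v1 hPQ1 _ hcF hcP
        exact h1 ((heq.symm.trans hcv).symm ▸ h2)
      · rcases (hBB i v1).mp hv1 with ⟨hW1, _⟩ | ⟨hPQ1, u1, hu1F, hu1W⟩
        · exact absurd hW1 h1
        rcases (hBB i v2).mp hv2 with ⟨hW2, _⟩ | ⟨hPQ2, u2, hu2F, hu2W⟩
        · exact absurd hW2 h2
        have hne1 : (F v1 ∩ W i).Nonempty := ⟨u1, mem_inter.mpr ⟨hu1F, hu1W⟩⟩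
        have hne2 : (F v2 ∩ W i).Nonempty := ⟨u2, mem_inter.mpr ⟨hu2F, hu2W⟩⟩
        rw [if_neg h1, dif_pos hne1, if_neg h2, dif_pos hne2] at heq
        by_contra hvne
        exact hFdisj v1 hPQ1 v2 hPQ2 hvne _ (mem_inter.mp hne1.choose_spec).1
          (heq ▸ (mem_inter.mp hne2.choose_spec).1)
  -- P ∩ Q is contained in the last new bag
  have hBBlastsup : P ∩ Q ⊆ BB (Fin.last n) := by
    intro v hv
    obtain ⟨u, huF, huA, huB⟩ := hFE v hv
    exact (hBQ (Fin.last n) v hv).mpr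
      ⟨u, huF, by rw [hWlast]; exact mem_inter.mpr ⟨huA, huB⟩⟩
  -- assemble the decomposition
  refine ⟨⟨hPuniv, hPQsep⟩, n + 1, Fin.snoc BB (P ∩ Q), ⟨?_, ?_, ?_, ?_⟩, ?_, ?_⟩
  · intro i
    refine Fin.lastCases ?_ ?_ i
    · rw [Fin.snoc_last]; exact inter_subset_left
    · intro i'
      rw [Fin.snoc_castSucc]
      exact fun v hv => hBBP i' v hv
  · intro v hv
    obtain ⟨i, hi⟩ := hWcov v (hle1 hv)
    exact ⟨i.castSucc, by
      rw [Fin.snoc_castSucc]; exact (hBB i v).mpr (Or.inl ⟨hi, hv⟩)⟩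
  · intro u v hadj hu hv
    obtain ⟨i, hui, hvi⟩ := hWedge u v hadj (hle1 hu) (hle1 hv)
    refine ⟨i.castSucc, ?_, ?_⟩
    · rw [Fin.snoc_castSucc]; exact (hBB i u).mpr (Or.inl ⟨hui, hu⟩)
    · rw [Fin.snoc_castSucc]; exact (hBB i v).mpr (Or.inl ⟨hvi, hv⟩)
  · intro i j k hij hjk
    rcases Fin.eq_castSucc_or_eq_last k with ⟨k', rfl⟩ | rfl
    · rcases Fin.eq_castSucc_or_eq_last j with ⟨j', rfl⟩ | rfl
      · rcases Fin.eq_castSucc_or_eq_last i with ⟨i', rfl⟩ | rfl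
        · simp only [Fin.snoc_castSucc]
          exact hBBint i' j' k' (Fin.castSucc_le_castSucc_iff.mp hij)
            (Fin.castSucc_le_castSucc_iff.mp hjk)
        · exact absurd hij (not_le.mpr (Fin.castSucc_lt_last j'))
      · exact absurd hjk (not_le.mpr (Fin.castSucc_lt_last k'))
    · rcases Fin.eq_castSucc_or_eq_last i with ⟨i', rfl⟩ | rfl
      · rcases Fin.eq_castSucc_or_eq_last j with ⟨j', rfl⟩ | rfl
        · rw [Fin.snoc_castSucc, Fin.snoc_last, Fin.snoc_castSucc]
          intro v hv
          rw [mem_inter] at hv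
          exact hBBint i' j' (Fin.last n) (Fin.castSucc_le_castSucc_iff.mp hij)
            (Fin.le_last j') (mem_inter.mpr ⟨hv.1, hBBlastsup hv.2⟩)
        · rw [Fin.snoc_last]; exact inter_subset_right
      · have hj : j = Fin.last (n + 1) := le_antisymm (Fin.le_last j) hij
        subst hj
        rw [Fin.snoc_last]
        exact inter_subset_right
  · intro i
    refine Fin.lastCases ?_ ?_ i
    · rw [Fin.snoc_last]
      calc (P ∩ Q).card ≤ (BB (Fin.last n)).card := card_le_card hBBlastsup
        _ ≤ (W (Fin.last n)).card := hBBcard _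
        _ ≤ w + 1 := hWcard _
    · intro i'
      rw [Fin.snoc_castSucc]
      exact le_trans (hBBcard i') (hWcard i')
  · exact Fin.snoc_last _ _
end

section
/- Let G be a graph and let (A,B) ≤ (A',B') be separations of G. If every separation (P,Q) of G with (A,B) ≤ (P,Q) ≤ (A',B') has order at least k, then there exist k vertex-disjoint paths in G from A to B'. -/
open Finset

namespace MG

open scoped Classical
open SimpleGraph

set_option linter.unusedSectionVars false
set_option maxHeartbeats 1000000

variable {V : Type} [Fintype V] [DecidableEq V]

/-- separator predicate: every X-Y walk meets S -/
def MSep (G : SimpleGraph V) (X Y S : Finset V) : Prop :=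
  ∀ ⦃u v : V⦄, u ∈ X → v ∈ Y → ∀ p : G.Walk u v, ∃ s ∈ S, s ∈ p.support

/-- reachability avoiding T -/
def MRch (G : SimpleGraph V) (X T : Finset V) : Set V :=
  {v | ∃ u ∈ X, ∃ p : G.Walk u v, ∀ z ∈ p.support, z ∉ T}

lemma mrch_start {G : SimpleGraph V} {X T : Finset V} {u : V} (hu : u ∈ X) (hT : u ∉ T) :
    u ∈ MRch G X T :=
  ⟨u, hu, Walk.nil, by simp [hT]⟩

lemma mrch_adj {G : SimpleGraph V} {X T : Finset V} {v w : V} (hv : v ∈ MRch G X T)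
    (h : G.Adj v w) (hw : w ∉ T) : w ∈ MRch G X T := by
  obtain ⟨u, hu, p, hp⟩ := hv
  refine ⟨u, hu, p.append (Walk.cons h Walk.nil), ?_⟩
  intro z hz
  rw [Walk.mem_support_append_iff] at hz
  rcases hz with hz | hz
  · exact hp z hz
  · simp only [Walk.support_cons, Walk.support_nil, List.mem_cons, List.mem_singleton,
      List.not_mem_nil, or_false] at hz
    rcases hz with rfl | rfl
    · exact hp _ (Walk.end_mem_support p)
    · exact hw

lemma mrch_support {G : SimpleGraph V} {X T : Finset V} {u v : V} {p : G.Walk u v}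
    (hu : u ∈ X) (hp : ∀ z ∈ p.support, z ∉ T) {z : V} (hz : z ∈ p.support) :
    z ∈ MRch G X T :=
  ⟨u, hu, p.takeUntil z hz, fun w hw => hp w (p.support_takeUntil_subset hz hw)⟩

lemma mrch_not_target {G : SimpleGraph V} {X Z T : Finset V} (hT : MSep G X Z T) {v : V}
    (hv : v ∈ MRch G X T) (hvZ : v ∈ Z) : False := by
  obtain ⟨u, hu, p, hp⟩ := hv
  obtain ⟨s, hsT, hs⟩ := hT hu hvZ p
  exact hp s hs hsT

/-- walk confinement principle -/
lemma walk_confine {G : SimpleGraph V} {u v : V} (p : G.Walk u v) (P : V → Prop)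
    (h0 : P u) (hstep : ∀ a b, G.Adj a b → b ∈ p.support → P a → P b) : P v := by
  induction p with
  | nil => exact h0
  | @cons a b c h q ih =>
    refine ih (hstep a b h (by simp [Walk.support_cons]) h0) ?_
    intro a' b' hadj hb' ha'
    exact hstep a' b' hadj (by simp [Walk.support_cons, hb']) ha'

lemma msep_symm {G : SimpleGraph V} {X Y S : Finset V} (h : MSep G X Y S) : MSep G Y X S := by
  intro u v hu hv p
  obtain ⟨s, hsS, hs⟩ := h hv hu p.reverse
  rw [Walk.support_reverse, List.mem_reverse] at hs
  exact ⟨s, hsS, hs⟩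


lemma end_not_mem_takeUntil {G : SimpleGraph V} {a b u : V} {p : G.Walk a b}
    (hp : p.IsPath) (hu : u ∈ p.support) (hub : u ≠ b) :
    b ∉ (p.takeUntil u hu).support := by
  intro hb
  have hspec := p.take_spec hu
  have hnd : p.support.Nodup := hp.support_nodup
  rw [← hspec, Walk.support_append] at hnd
  have hdisj := List.disjoint_of_nodup_append hnd
  have hbd : b ∈ (p.dropUntil u hu).support := Walk.end_mem_support _
  rw [Walk.support_eq_cons] at hbd
  rcases List.mem_cons.1 hbd with h | h
  · exact hub h.symm
  · exact hdisj hb h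

lemma start_not_mem_dropUntil {G : SimpleGraph V} {a b u : V} {p : G.Walk a b}
    (hp : p.IsPath) (hu : u ∈ p.support) (hua : u ≠ a) :
    a ∉ (p.dropUntil u hu).support := by
  intro ha
  have hspec := p.take_spec hu
  have hnd : p.support.Nodup := hp.support_nodup
  rw [← hspec, Walk.support_append] at hnd
  have hdisj := List.disjoint_of_nodup_append hnd
  have hat : a ∈ (p.takeUntil u hu).support := Walk.start_mem_support _
  rw [Walk.support_eq_cons (p.dropUntil u hu)] at ha
  rcases List.mem_cons.1 ha with h | h
  · exact hua h.symm
  · exact hdisj hat h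

lemma isPath_append_of {G : SimpleGraph V} {a b c : V} {p : G.Walk a b} {q : G.Walk b c}
    (hp : p.IsPath) (hq : q.IsPath)
    (h : ∀ u, u ∈ p.support → u ∈ q.support → u = b) : (p.append q).IsPath := by
  rw [Walk.isPath_def, Walk.support_append, List.nodup_append]
  refine ⟨hp.support_nodup, ?_, ?_⟩
  · have := hq.support_nodup
    rw [Walk.support_eq_cons] at this
    exact this.of_cons
  · intro u hup w huq huw
    rw [← huw] at huq
    have huq' : u ∈ q.support := List.mem_of_mem_tail huq
    have := h u hup huq'
    subst this
    have := hq.support_nodup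
    rw [Walk.support_eq_cons] at this
    exact (List.nodup_cons.1 this).1 huq

/-- trim a path at its first vertex in M -/
lemma trim {G : SimpleGraph V} {M : Finset V} {u v : V} (p : G.Walk u v)
    (hp : p.IsPath) (hv : v ∈ M) :
    ∃ w, ∃ q : G.Walk u w, q.IsPath ∧ w ∈ M ∧ (∀ z ∈ q.support, z ∈ M → z = w) ∧
      (∀ z ∈ q.support, z ∈ p.support) := by
  induction p with
  | nil => exact ⟨_, Walk.nil, by simp, hv, by simp, by simp⟩
  | @cons a b c h q ih =>
    by_cases ha : a ∈ M
    · exact ⟨a, Walk.nil, by simp, ha, by simp, by simp⟩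
    · obtain ⟨w, r, hr, hwM, honce, hsub⟩ := ih ((Walk.cons_isPath_iff h q).1 hp).1 hv
      have haq : a ∉ q.support := ((Walk.cons_isPath_iff h q).1 hp).2
      refine ⟨w, Walk.cons h r, ?_, hwM, ?_, ?_⟩
      · rw [Walk.cons_isPath_iff]
        exact ⟨hr, fun hcontra => haq (hsub a hcontra)⟩
      · intro z hz hzM
        rw [Walk.support_cons, List.mem_cons] at hz
        rcases hz with rfl | hz
        · exact absurd hzM ha
        · exact honce z hz hzM
      · intro z hz
        rw [Walk.support_cons, List.mem_cons] at hz
        rw [Walk.support_cons, List.mem_cons]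
        rcases hz with rfl | hz
        · exact Or.inl rfl
        · exact Or.inr (hsub z hz)

lemma disjPaths_zero (G : SimpleGraph V) (X Y : Finset V) : DisjPaths G 0 X Y :=
  ⟨Fin.elim0, Fin.elim0, fun i => i.elim0, fun i => i.elim0, fun i => i.elim0,
    fun i => i.elim0, fun i => i.elim0⟩

lemma disjPaths_symm {G : SimpleGraph V} {k : ℕ} {X Y : Finset V}
    (h : DisjPaths G k X Y) : DisjPaths G k Y X := by
  obtain ⟨a, b, p, hpath, ha, hb, hdisj⟩ := h
  refine ⟨b, a, fun i => (p i).reverse, fun i => (hpath i).reverse, hb, ha, ?_⟩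
  intro i j hij v hv
  rw [Walk.support_reverse, List.mem_reverse] at hv ⊢
  exact hdisj i j hij v hv

lemma disjPaths_mono {G H : SimpleGraph V} (hle : H ≤ G) {k : ℕ} {X Y : Finset V}
    (h : DisjPaths H k X Y) : DisjPaths G k X Y := by
  obtain ⟨a, b, p, hpath, ha, hb, hdisj⟩ := h
  have het : ∀ i, ∀ e ∈ (p i).edges, e ∈ G.edgeSet :=
    fun i e he => edgeSet_mono hle ((p i).edges_subset_edgeSet he)
  refine ⟨a, b, fun i => (p i).transfer G (het i), fun i => (hpath i).transfer _,
    ha, hb, ?_⟩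
  intro i j hij v hv
  rw [Walk.support_transfer] at hv ⊢
  exact hdisj i j hij v hv

/-- a walk in G that avoids vertex x can be moved to G minus an edge at x -/
lemma transfer_down {G : SimpleGraph V} {x y u v : V} (p : G.Walk u v)
    (hx : x ∉ p.support) :
    ∃ q : (G.deleteEdges {s(x,y)}).Walk u v, q.support = p.support := by
  have h : ∀ e ∈ p.edges, e ∈ (G.deleteEdges {s(x,y)}).edgeSet := by
    intro e he
    rw [edgeSet_deleteEdges]
    refine ⟨p.edges_subset_edgeSet he, ?_⟩
    intro hcontra
    rw [Set.mem_singleton_iff] at hcontra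
    subst hcontra
    exact hx (p.fst_mem_support_of_mem_edges he)
  exact ⟨p.transfer _ h, Walk.support_transfer _ _⟩


/-- extension: C separates X from S in G-e, S separates X,Y in G-e ⇒ C+x separates X,Y in G -/
lemma msep_extend {G : SimpleGraph V} {x y : V} {X Y S C : Finset V}
    (hS : MSep (G.deleteEdges {s(x,y)}) X Y S)
    (hC : MSep (G.deleteEdges {s(x,y)}) X S C) :
    MSep G X Y (C ∪ {x}) := by
  intro u v hu hv p
  by_cases hx : x ∈ p.support
  · exact ⟨x, by simp, hx⟩
  · obtain ⟨q, hq⟩ := transfer_down (y := y) p hx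
    obtain ⟨s, hsS, hs⟩ := hS hu hv q
    obtain ⟨c, hcC, hc⟩ := hC hu hsS (q.takeUntil s hs)
    exact ⟨c, by simp [hcC], hq ▸ q.support_takeUntil_subset hs hc⟩

/-- key lifting: T separates X from S∪{x}∪{y} in G-e ⇒ T separates X from Y in G -/
lemma msep_up {G : SimpleGraph V} {x y : V} {X Y S T : Finset V}
    (hT : MSep (G.deleteEdges {s(x,y)}) X (S ∪ {x} ∪ {y}) T)
    (hS : MSep (G.deleteEdges {s(x,y)}) X Y S) :
    MSep G X Y T := by
  classical
  set G' := G.deleteEdges {s(x,y)} with hG'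
  intro u v hu hv p
  by_contra hno
  push_neg at hno
  have havoid : ∀ z ∈ p.support, z ∉ T := fun z hz hzT => hno z hzT hz
  set A : Set V := MRch G' X T with hA
  have hAnot : ∀ w ∈ A, w ∉ (S ∪ {x} ∪ {y} : Finset V) := by
    intro w hw hwS
    exact mrch_not_target hT hw hwS
  have hv_inA : v ∈ A := by
    refine walk_confine p (· ∈ A) (mrch_start hu (havoid u (Walk.start_mem_support p))) ?_
    intro a b hab hb ha
    have hbT : b ∉ T := havoid b hb
    by_cases he : s(a,b) = s(x,y)
    · exfalso
      rcases Sym2.eq_iff.1 he with ⟨rfl, rfl⟩ | ⟨rfl, rfl⟩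
      · exact hAnot a ha (by simp)
      · exact hAnot a ha (by simp)
    · have hab' : G'.Adj a b := by
        rw [hG', deleteEdges_adj]
        exact ⟨hab, by simpa using he⟩
      exact mrch_adj ha hab' hbT
  obtain ⟨u', hu', q, hq⟩ := hv_inA
  obtain ⟨s, hsS, hs⟩ := hS hu' hv q
  exact hAnot s (mrch_support hu' hq hs) (by simp [hsS])


structure MLink (G : SimpleGraph V) (k : ℕ) (X M : Finset V) where
  a : Fin k → V
  w : Fin k → V
  p : ∀ i, G.Walk (a i) (w i)
  path : ∀ i, (p i).IsPath
  ha : ∀ i, a i ∈ X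
  hw : ∀ i, w i ∈ M
  once : ∀ i, ∀ z ∈ (p i).support, z ∈ M → z = w i
  disj : ∀ i j, i ≠ j → ∀ v ∈ (p i).support, v ∉ (p j).support

lemma mlink_of_disjPaths {G : SimpleGraph V} {k : ℕ} {X M : Finset V}
    (h : DisjPaths G k X M) : Nonempty (MLink G k X M) := by
  obtain ⟨a, b, p, hpath, hX, hM, hdisj⟩ := h
  have H : ∀ i, ∃ w, ∃ q : G.Walk (a i) w, q.IsPath ∧ w ∈ M ∧
      (∀ z ∈ q.support, z ∈ M → z = w) ∧ (∀ z ∈ q.support, z ∈ (p i).support) :=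
    fun i => trim (p i) (hpath i) (hM i)
  choose w q hq1 hq2 hq3 hq4 using H
  exact ⟨⟨a, w, q, hq1, hX, hq2, hq3,
    fun i j hij v hv hv' => hdisj i j hij v (hq4 i v hv) (hq4 j v hv')⟩⟩

lemma mlink_w_inj {G : SimpleGraph V} {k : ℕ} {X M : Finset V} (L : MLink G k X M) :
    Function.Injective L.w := by
  intro i j hij
  by_contra hne
  have h2 : L.w i ∈ (L.p j).support := by rw [hij]; exact Walk.end_mem_support _
  exact L.disj i j hne (L.w i) (Walk.end_mem_support _) h2

lemma mlink_img {G : SimpleGraph V} {k : ℕ} {X M : Finset V} (L : MLink G k X M)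
    (hM : M.card ≤ k) : Finset.image L.w Finset.univ = M := by
  have hcard : (Finset.image L.w Finset.univ).card = k := by
    rw [Finset.card_image_of_injective _ (mlink_w_inj L), Finset.card_univ,
      Fintype.card_fin]
  refine Finset.eq_of_subset_of_card_le ?_ (by omega)
  intro z hz
  obtain ⟨i, _, rfl⟩ := Finset.mem_image.1 hz
  exact L.hw i

lemma cross {H : SimpleGraph V} {X Y S : Finset V} (hS : MSep H X Y S)
    {a w z b u : V} (p : H.Walk a w) (q : H.Walk z b)
    (hp : p.IsPath) (hq : q.IsPath) (ha : a ∈ X) (hb : b ∈ Y)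
    (hpS : ∀ t ∈ p.support, t ∈ S → t = w) (hqS : ∀ t ∈ q.support, t ∈ S → t = z)
    (hup : u ∈ p.support) (huq : u ∈ q.support) (hw : u ≠ w) (hz : u ≠ z) : False := by
  obtain ⟨s, hsS, hs⟩ := hS ha hb ((p.takeUntil u hup).append (q.dropUntil u huq))
  rw [Walk.mem_support_append_iff] at hs
  rcases hs with hs | hs
  · have hsp : s ∈ p.support := p.support_takeUntil_subset hup hs
    have heq : s = w := hpS s hsp hsS
    subst heq
    exact end_not_mem_takeUntil hp hup hw hs
  · have hsq : s ∈ q.support := q.support_dropUntil_subset huq hs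
    have heq : s = z := hqS s hsq hsS
    subst heq
    exact start_not_mem_dropUntil hq huq hz hs

lemma glue1 {G' : SimpleGraph V} {X Y S M : Finset V} {k : ℕ}
    (hS : MSep G' X Y S) (hSM : S ⊆ M)
    (L : MLink G' k X M) (R : MLink G' k Y M)
    (himgR : Finset.image R.w Finset.univ = M) :
    DisjPaths G' k X Y := by
  have hmatch : ∀ i, ∃ j, R.w j = L.w i := by
    intro i
    have hmem : L.w i ∈ Finset.image R.w Finset.univ := by
      rw [himgR]; exact L.hw i
    obtain ⟨j, _, hj⟩ := Finset.mem_image.1 hmem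
    exact ⟨j, hj⟩
  choose σ hσ using hmatch
  have hσinj : Function.Injective σ := by
    intro i j hij
    apply mlink_w_inj L
    rw [← hσ i, ← hσ j, hij]
  -- the key common-vertex fact
  have hLR : ∀ i j u, u ∈ (L.p i).support → u ∈ (R.p j).support →
      u = L.w i ∧ u = R.w j := by
    intro i j u hui huj
    by_cases h1 : u = L.w i
    · exact ⟨h1, R.once j u huj (by rw [h1]; exact L.hw i)⟩
    by_cases h2 : u = R.w j
    · exact ⟨L.once i u hui (by rw [h2]; exact R.hw j), h2⟩
    exfalso
    refine cross hS (L.p i) (R.p j).reverse (L.path i) (R.path j).reverse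
      (L.ha i) (R.ha j) ?_ ?_ hui ?_ h1 h2
    · intro t ht htS
      exact L.once i t ht (hSM htS)
    · intro t ht htS
      rw [Walk.support_reverse, List.mem_reverse] at ht
      exact R.once j t ht (hSM htS)
    · rw [Walk.support_reverse, List.mem_reverse]
      exact huj
  refine ⟨L.a, fun i => R.a (σ i),
    fun i => (L.p i).append (((R.p (σ i)).reverse).copy (hσ i) rfl),
    ?_, L.ha, fun i => R.ha (σ i), ?_⟩
  · intro i
    refine isPath_append_of (L.path i) (by rw [Walk.isPath_copy]; exact (R.path (σ i)).reverse) ?_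
    intro u hu hu'
    rw [Walk.support_copy, Walk.support_reverse, List.mem_reverse] at hu'
    exact (hLR i (σ i) u hu hu').1
  · intro i j hij v hv hv'
    rw [Walk.mem_support_append_iff, Walk.support_copy, Walk.support_reverse,
      List.mem_reverse] at hv hv'
    rcases hv with hv | hv <;> rcases hv' with hv' | hv'
    · exact L.disj i j hij v hv hv'
    · obtain ⟨h1, h2⟩ := hLR i (σ j) v hv hv'
      rw [hσ j] at h2
      exact hij (mlink_w_inj L (h1.symm.trans h2))
    · obtain ⟨h1, h2⟩ := hLR j (σ i) v hv' hv
      rw [hσ i] at h2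
      exact hij (mlink_w_inj L (h2.symm.trans h1))
    · refine R.disj (σ i) (σ j) (fun hc => hij (hσinj hc)) v hv hv'

lemma glue2 {G G' : SimpleGraph V} (hle : G' ≤ G) {X Y S : Finset V} {c d : V} {k : ℕ}
    (hcd : G.Adj c d) (hc : c ∉ S) (hd : d ∉ S) (hne : c ≠ d)
    (hS : MSep G' X Y S)
    (L : MLink G' k X (S ∪ {c})) (R : MLink G' k Y (S ∪ {d}))
    (himgL : Finset.image L.w Finset.univ = S ∪ {c})
    (himgR : Finset.image R.w Finset.univ = S ∪ {d}) :
    DisjPaths G k X Y := by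
  -- pick the indices hitting c and d
  have hc' : c ∈ Finset.image L.w Finset.univ := by rw [himgL]; simp
  have hd' : d ∈ Finset.image R.w Finset.univ := by rw [himgR]; simp
  obtain ⟨i₀, -, hi₀⟩ := Finset.mem_image.1 hc'
  obtain ⟨j₀, -, hj₀⟩ := Finset.mem_image.1 hd'
  -- basic membership facts
  have hwS : ∀ i, i ≠ i₀ → L.w i ∈ S := by
    intro i hi
    rcases Finset.mem_union.1 (L.hw i) with h | h
    · exact h
    · exfalso; apply hi; apply mlink_w_inj L
      rw [hi₀, Finset.mem_singleton.1 h]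
  have hzS : ∀ j, j ≠ j₀ → R.w j ∈ S := by
    intro j hj
    rcases Finset.mem_union.1 (R.hw j) with h | h
    · exact h
    · exfalso; apply hj; apply mlink_w_inj R
      rw [hj₀, Finset.mem_singleton.1 h]
  -- the special left path avoids S entirely
  have havoidL0 : ∀ t ∈ (L.p i₀).support, t ∉ S := by
    intro t ht htS
    have := L.once i₀ t ht (Finset.mem_union_left _ htS)
    rw [this, hi₀] at htS
    exact hc htS
  have havoidR0 : ∀ t ∈ (R.p j₀).support, t ∉ S := by
    intro t ht htS
    have := R.once j₀ t ht (Finset.mem_union_left _ htS)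
    rw [this, hj₀] at htS
    exact hd htS
  -- c doesn't appear on right paths
  have hc_notin_R : ∀ j, c ∉ (R.p j).support := by
    intro j hcj
    have hcw : c ≠ R.w j := by
      intro h
      rcases Finset.mem_union.1 (R.hw j) with h' | h'
      · exact hc (h ▸ h')
      · exact hne (h.trans (Finset.mem_singleton.1 h'))
    have havoidpre : ∀ t ∈ ((R.p j).takeUntil c hcj).support, t ∉ S := by
      intro t ht htS
      have htj : t ∈ (R.p j).support := (R.p j).support_takeUntil_subset hcj ht
      have := R.once j t htj (Finset.mem_union_left _ htS)
      rw [this] at ht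
      exact end_not_mem_takeUntil (R.path j) hcj hcw ht
    obtain ⟨s, hsS, hs⟩ := hS (L.ha i₀) (R.ha j)
      (((L.p i₀).copy rfl hi₀).append ((R.p j).takeUntil c hcj).reverse)
    rw [Walk.mem_support_append_iff] at hs
    rcases hs with hs | hs
    · rw [Walk.support_copy] at hs
      exact havoidL0 s hs hsS
    · rw [Walk.support_reverse, List.mem_reverse] at hs
      exact havoidpre s hs hsS
  -- d doesn't appear on left paths
  have hd_notin_L : ∀ i, d ∉ (L.p i).support := by
    intro i hdi
    have hdw : d ≠ L.w i := by
      intro h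
      rcases Finset.mem_union.1 (L.hw i) with h' | h'
      · exact hd (h ▸ h')
      · exact hne ((Finset.mem_singleton.1 h').symm.trans h.symm)
    have havoidpre : ∀ t ∈ ((L.p i).takeUntil d hdi).support, t ∉ S := by
      intro t ht htS
      have hti : t ∈ (L.p i).support := (L.p i).support_takeUntil_subset hdi ht
      have := L.once i t hti (Finset.mem_union_left _ htS)
      rw [this] at ht
      exact end_not_mem_takeUntil (L.path i) hdi hdw ht
    obtain ⟨s, hsS, hs⟩ := hS (L.ha i) (R.ha j₀)
      (((L.p i).takeUntil d hdi).append ((R.p j₀).copy rfl hj₀).reverse)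
    rw [Walk.mem_support_append_iff] at hs
    rcases hs with hs | hs
    · exact havoidpre s hs hsS
    · rw [Walk.support_reverse, List.mem_reverse, Walk.support_copy] at hs
      exact havoidR0 s hs hsS
  -- common vertex forcing
  have hLR : ∀ i j u, u ∈ (L.p i).support → u ∈ (R.p j).support →
      u = L.w i ∧ u = R.w j := by
    intro i j u hui huj
    by_cases h1 : u = L.w i
    · refine ⟨h1, ?_⟩
      have huM : u ∈ S ∪ {c} := by rw [h1]; exact L.hw i
      rcases Finset.mem_union.1 huM with h | h
      · exact R.once j u huj (Finset.mem_union_left _ h)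
      · exact absurd ((Finset.mem_singleton.1 h) ▸ huj) (hc_notin_R j)
    by_cases h2 : u = R.w j
    · refine ⟨?_, h2⟩
      have huM : u ∈ S ∪ {d} := by rw [h2]; exact R.hw j
      rcases Finset.mem_union.1 huM with h | h
      · exact L.once i u hui (Finset.mem_union_left _ h)
      · exact absurd ((Finset.mem_singleton.1 h) ▸ hui) (hd_notin_L i)
    exfalso
    refine cross hS (L.p i) (R.p j).reverse (L.path i) (R.path j).reverse
      (L.ha i) (R.ha j) ?_ ?_ hui ?_ h1 h2
    · intro t ht htS
      exact L.once i t ht (Finset.mem_union_left _ htS)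
    · intro t ht htS
      rw [Walk.support_reverse, List.mem_reverse] at ht
      exact R.once j t ht (Finset.mem_union_left _ htS)
    · rw [Walk.support_reverse, List.mem_reverse]; exact huj
  -- matching
  have hmatch : ∀ i, i ≠ i₀ → ∃ j, R.w j = L.w i := by
    intro i hi
    have : L.w i ∈ Finset.image R.w Finset.univ := by
      rw [himgR]; exact Finset.mem_union_left _ (hwS i hi)
    obtain ⟨j, -, hj⟩ := Finset.mem_image.1 this
    exact ⟨j, hj⟩
  have hσex : ∀ i, ∃ j, (i = i₀ → j = j₀) ∧ (i ≠ i₀ → R.w j = L.w i) := by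
    intro i
    by_cases hi : i = i₀
    · exact ⟨j₀, fun _ => rfl, fun h => absurd hi h⟩
    · obtain ⟨j, hj⟩ := hmatch i hi
      exact ⟨j, fun h => absurd h hi, fun _ => hj⟩
  choose σ hσ0 hσval using hσex
  have hσi₀ : σ i₀ = j₀ := hσ0 i₀ rfl
  have hσne : ∀ i, i ≠ i₀ → σ i ≠ j₀ := by
    intro i hi hcontra
    have h1 : R.w (σ i) = L.w i := hσval i hi
    rw [hcontra, hj₀] at h1
    exact hd (h1 ▸ hwS i hi)
  have hσinj : Function.Injective σ := by
    intro i j hij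
    by_cases hi : i = i₀ <;> by_cases hj : j = i₀
    · rw [hi, hj]
    · exfalso; apply hσne j hj; rw [← hij, hi, hσi₀]
    · exfalso; apply hσne i hi; rw [hij, hj, hσi₀]
    · apply mlink_w_inj L
      rw [← hσval i hi, ← hσval j hj, hij]
  -- transfer walks to G
  have hel : ∀ i, ∀ e ∈ (L.p i).edges, e ∈ G.edgeSet :=
    fun i e he => SimpleGraph.edgeSet_mono hle ((L.p i).edges_subset_edgeSet he)
  have her : ∀ j, ∀ e ∈ (R.p j).edges, e ∈ G.edgeSet :=
    fun j e he => SimpleGraph.edgeSet_mono hle ((R.p j).edges_subset_edgeSet he)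
  -- the combined walks
  have hwalk : ∀ i, ∃ q : G.Walk (L.a i) (R.a (σ i)),
      (∀ u, u ∈ q.support ↔ (u ∈ (L.p i).support ∨ u ∈ (R.p (σ i)).support)) ∧
      q.IsPath := by
    intro i
    by_cases hi : i = i₀
    · have hwc : L.w i = c := by rw [hi, hi₀]
      have hsc : σ i = j₀ := by rw [hi, hσi₀]
      refine ⟨(((L.p i).transfer G (hel i)).copy rfl hwc).append
        (Walk.cons hcd ((((R.p j₀).transfer G (her j₀)).copy rfl hj₀).reverse.copy
          rfl (by rw [hsc]))), ?_, ?_⟩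
      · intro u
        rw [Walk.mem_support_append_iff, Walk.support_copy, Walk.support_transfer,
          Walk.support_cons]
        constructor
        · rintro (hu | hu)
          · exact Or.inl hu
          · rcases List.mem_cons.1 hu with hu | hu
            · left
              have : u = L.w i := hu.trans hwc.symm
              rw [this]; exact Walk.end_mem_support _
            · right
              rw [Walk.support_copy, Walk.support_reverse, List.mem_reverse,
                Walk.support_copy, Walk.support_transfer] at hu
              rw [hsc]; exact hu
        · rintro (hu | hu)
          · exact Or.inl hu
          · refine Or.inr (List.mem_cons.2 (Or.inr ?_))
            rw [Walk.support_copy, Walk.support_reverse, List.mem_reverse,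
              Walk.support_copy, Walk.support_transfer]
            rw [hsc] at hu; exact hu
      · refine isPath_append_of ?_ ?_ ?_
        · rw [Walk.isPath_copy]; exact (L.path i).transfer _
        · rw [Walk.cons_isPath_iff]
          constructor
          · rw [Walk.isPath_copy, Walk.isPath_reverse_iff, Walk.isPath_copy]
            exact (R.path j₀).transfer _
          · rw [Walk.support_copy, Walk.support_reverse, List.mem_reverse,
              Walk.support_copy, Walk.support_transfer]
            exact hc_notin_R j₀
        · intro u hu hu'
          rw [Walk.support_copy, Walk.support_transfer] at hu
          rcases List.mem_cons.1 hu' with hu' | hu'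
          · exact hu'
          · rw [Walk.support_copy, Walk.support_reverse, List.mem_reverse,
              Walk.support_copy, Walk.support_transfer] at hu'
            exact (hLR i j₀ u hu hu').1.trans hwc
    · refine ⟨((L.p i).transfer G (hel i)).append
        ((((R.p (σ i)).transfer G (her (σ i))).reverse).copy (hσval i hi) rfl),
        ?_, ?_⟩
      · intro u
        rw [Walk.mem_support_append_iff, Walk.support_transfer, Walk.support_copy,
          Walk.support_reverse, List.mem_reverse, Walk.support_transfer]
      · refine isPath_append_of ((L.path i).transfer _) ?_ ?_
        · rw [Walk.isPath_copy, Walk.isPath_reverse_iff]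
          exact (R.path (σ i)).transfer _
        · intro u hu hu'
          rw [Walk.support_transfer] at hu
          rw [Walk.support_copy, Walk.support_reverse, List.mem_reverse,
            Walk.support_transfer] at hu'
          exact (hLR i (σ i) u hu hu').1
  choose wk hwksupp hwkpath using hwalk
  refine ⟨L.a, fun i => R.a (σ i), wk, hwkpath, L.ha, fun i => R.ha (σ i), ?_⟩
  intro i j hij v hv hv'
  rw [hwksupp i v] at hv
  rw [hwksupp j v] at hv'
  rcases hv with hv | hv <;> rcases hv' with hv' | hv'
  · exact L.disj i j hij v hv hv'
  · obtain ⟨h1, h2⟩ := hLR i (σ j) v hv hv'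
    by_cases hj : j = i₀
    · subst hj
      rw [hσi₀, hj₀] at h2
      exact hd_notin_L i (h2 ▸ hv)
    · rw [hσval j hj] at h2
      exact hij (mlink_w_inj L (h1.symm.trans h2))
  · obtain ⟨h1, h2⟩ := hLR j (σ i) v hv' hv
    by_cases hi : i = i₀
    · subst hi
      rw [hσi₀, hj₀] at h2
      exact hd_notin_L j (h2 ▸ hv')
    · rw [hσval i hi] at h2
      exact hij (mlink_w_inj L (h2.symm.trans h1))
  · exact R.disj (σ i) (σ j) (fun hcon => hij (hσinj hcon)) v hv hv'

lemma submod {G : SimpleGraph V} {x y : V} {X Y S Tx Ty : Finset V} {k : ℕ}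
    (hS : MSep (G.deleteEdges {s(x,y)}) X Y S)
    (hTx : MSep (G.deleteEdges {s(x,y)}) X (S ∪ {x}) Tx)
    (hTy : MSep (G.deleteEdges {s(x,y)}) X (S ∪ {y}) Ty)
    (hk : ∀ S', MSep G X Y S' → k ≤ S'.card) :
    k + k ≤ Tx.card + Ty.card + 1 := by
  classical
  set G' := G.deleteEdges {s(x,y)} with hG'
  set Ax : Set V := MRch G' X Tx with hAx
  set Ay : Set V := MRch G' X Ty with hAy
  set Cin : Finset V := (Tx ∩ Ty) ∪ Tx.filter (· ∈ Ay) ∪ Ty.filter (· ∈ Ax) with hCin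
  set Cun : Finset V := (Tx ∩ Ty) ∪ Tx.filter (fun t => t ∉ Ay ∧ t ∉ Ty)
      ∪ Ty.filter (fun t => t ∉ Ax ∧ t ∉ Tx) with hCun
  -- claim 1
  have claim1 : MSep G' X (S ∪ {x} ∪ {y}) Cin := by
    intro u v hu hv p
    by_contra hno
    push_neg at hno
    have havoid : ∀ z ∈ p.support, z ∉ Cin := fun z hz hzC => hno z hzC hz
    have hstart : ∀ z, z ∈ X → z ∉ Cin → z ∈ Ax ∧ z ∈ Ay := by
      intro z hzX hzC
      constructor
      · by_cases hzT : z ∈ Tx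
        · exfalso
          by_cases hzTy : z ∈ Ty
          · exact hzC (by simp [hCin, mem_inter, hzT, hzTy])
          · have : z ∈ Ay := mrch_start hzX hzTy
            exact hzC (by simp [hCin, mem_filter, hzT, this])
        · exact mrch_start hzX hzT
      · by_cases hzT : z ∈ Ty
        · exfalso
          by_cases hzTx : z ∈ Tx
          · exact hzC (by simp [hCin, mem_inter, hzT, hzTx])
          · have : z ∈ Ax := mrch_start hzX hzTx
            exact hzC (by simp [hCin, mem_filter, hzT, this])
        · exact mrch_start hzX hzT
    have hend : v ∈ Ax ∧ v ∈ Ay := by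
      refine walk_confine p (fun z => z ∈ Ax ∧ z ∈ Ay)
        (hstart u hu (havoid u (Walk.start_mem_support p))) ?_
      rintro a b hab hb ⟨haAx, haAy⟩
      have hbC : b ∉ Cin := havoid b hb
      constructor
      · by_cases hbT : b ∈ Tx
        · exfalso
          by_cases hbTy : b ∈ Ty
          · exact hbC (by simp [hCin, mem_inter, hbT, hbTy])
          · have : b ∈ Ay := mrch_adj haAy hab hbTy
            exact hbC (by simp [hCin, mem_filter, hbT, this])
        · exact mrch_adj haAx hab hbT
      · by_cases hbT : b ∈ Ty
        · exfalso
          by_cases hbTx : b ∈ Tx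
          · exact hbC (by simp [hCin, mem_inter, hbT, hbTx])
          · have : b ∈ Ax := mrch_adj haAx hab hbTx
            exact hbC (by simp [hCin, mem_filter, hbT, this])
        · exact mrch_adj haAy hab hbT
    rcases Finset.mem_union.1 hv with hv' | hv'
    · exact mrch_not_target hTx hend.1 hv'
    · have : v ∈ S ∪ {y} := by
        simp only [Finset.mem_singleton] at hv'
        simp [hv']
      exact mrch_not_target hTy hend.2 this
  -- claim 2
  have claim2 : MSep G' X S Cun := by
    intro u v hu hv p
    by_contra hno
    push_neg at hno
    have havoid : ∀ z ∈ p.support, z ∉ Cun := fun z hz hzC => hno z hzC hz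
    have hstep : ∀ z, z ∉ Cun → z ∉ Tx → z ∉ Ty → False → True := fun _ _ _ _ _ => trivial
    have hend : v ∈ Ax ∨ v ∈ Ay := by
      refine walk_confine p (fun z => z ∈ Ax ∨ z ∈ Ay) ?_ ?_
      · have huC : u ∉ Cun := havoid u (Walk.start_mem_support p)
        by_cases hzT : u ∈ Tx
        · right
          by_cases hAy' : u ∈ Ay
          · exact hAy'
          · exfalso
            by_cases hTy' : u ∈ Ty
            · exact huC (by simp [hCun, mem_inter, hzT, hTy'])
            · exact huC (by simp [hCun, mem_filter, hzT, hAy', hTy'])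
        · exact Or.inl (mrch_start hu hzT)
      · rintro a b hab hb (haAx | haAy)
        · have hbC : b ∉ Cun := havoid b hb
          by_cases hbT : b ∈ Tx
          · right
            by_cases hbAy : b ∈ Ay
            · exact hbAy
            · exfalso
              by_cases hbTy : b ∈ Ty
              · exact hbC (by simp [hCun, mem_inter, hbT, hbTy])
              · exact hbC (by simp [hCun, mem_filter, hbT, hbAy, hbTy])
          · exact Or.inl (mrch_adj haAx hab hbT)
        · have hbC : b ∉ Cun := havoid b hb
          by_cases hbT : b ∈ Ty
          · left
            by_cases hbAx : b ∈ Ax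
            · exact hbAx
            · exfalso
              by_cases hbTx : b ∈ Tx
              · exact hbC (by simp [hCun, mem_inter, hbT, hbTx])
              · exact hbC (by simp [hCun, mem_filter, hbT, hbAx, hbTx])
          · exact Or.inr (mrch_adj haAy hab hbT)
    rcases hend with h | h
    · exact mrch_not_target hTx h (by simp [hv])
    · exact mrch_not_target hTy h (by simp [hv])
  -- cardinalities
  have hsub1 : Cin ∪ Cun ⊆ Tx ∪ Ty := by
    intro z hz
    simp only [hCin, hCun, Finset.mem_union, Finset.mem_inter, Finset.mem_filter] at hz
    rcases hz with ((⟨h,_⟩|⟨h,_⟩)|⟨h,_⟩) | ((⟨h,_⟩|⟨h,_⟩)|⟨h,_⟩) <;> simp [h]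
  have hsub2 : Cin ∩ Cun ⊆ Tx ∩ Ty := by
    intro z hz
    rw [Finset.mem_inter] at hz
    obtain ⟨h1, h2⟩ := hz
    simp only [hCin, Finset.mem_union, Finset.mem_inter, Finset.mem_filter] at h1
    simp only [hCun, Finset.mem_union, Finset.mem_inter, Finset.mem_filter] at h2
    rcases h1 with (h1|⟨hzTx, hzAy⟩)|⟨hzTy, hzAx⟩
    · exact Finset.mem_inter.2 h1
    · rcases h2 with (h2|⟨_, h, _⟩)|⟨_, _, h⟩
      · exact Finset.mem_inter.2 h2
      · exact absurd hzAy h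
      · exact absurd hzTx h
    · rcases h2 with (h2|⟨_, _, h⟩)|⟨_, h, _⟩
      · exact Finset.mem_inter.2 h2
      · exact absurd hzTy h
      · exact absurd hzAx h
  have hcards : Cin.card + Cun.card ≤ Tx.card + Ty.card := by
    have := Finset.card_union_add_card_inter Cin Cun
    have h1 : (Cin ∪ Cun).card ≤ (Tx ∪ Ty).card := Finset.card_le_card hsub1
    have h2 : (Cin ∩ Cun).card ≤ (Tx ∩ Ty).card := Finset.card_le_card hsub2
    have := Finset.card_union_add_card_inter Tx Ty
    omega
  have hk1 : k ≤ Cin.card := hk _ (msep_up claim1 hS)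
  have hk2 : k ≤ Cun.card + 1 := by
    have := hk _ (msep_extend hS claim2)
    calc k ≤ (Cun ∪ {x}).card := this
      _ ≤ Cun.card + ({x} : Finset V).card := Finset.card_union_le _ _
      _ = Cun.card + 1 := by simp
  omega

lemma no_edge_walk_eq {G : SimpleGraph V} (h : G.edgeFinset = ∅) {u v : V}
    (p : G.Walk u v) : u = v := by
  cases p with
  | nil => rfl
  | @cons _ w _ hadj q =>
    exfalso
    have hmem : s(u, w) ∈ G.edgeFinset := SimpleGraph.mem_edgeFinset.2 hadj
    rw [h] at hmem
    exact absurd hmem (Finset.notMem_empty _)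

lemma menger_base {G : SimpleGraph V} (h : G.edgeFinset = ∅) {X Y : Finset V} {k : ℕ}
    (hk : ∀ S, MSep G X Y S → k ≤ S.card) : DisjPaths G k X Y := by
  have hXY : MSep G X Y (X ∩ Y) := by
    intro u v hu hv p
    have heq := no_edge_walk_eq h p
    exact ⟨u, Finset.mem_inter.2 ⟨hu, heq ▸ hv⟩, Walk.start_mem_support p⟩
  obtain ⟨Z, hZsub, hZcard⟩ := Finset.exists_subset_card_eq (hk _ hXY)
  set f : Fin k → V := fun i => (Z.equivFin.symm (Fin.cast hZcard.symm i)).1 with hf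
  have hfinj : Function.Injective f := by
    intro i j hij
    have := Z.equivFin.symm.injective (Subtype.ext hij)
    exact Fin.cast_injective _ this
  have hfZ : ∀ i, f i ∈ Z := fun i => (Z.equivFin.symm (Fin.cast hZcard.symm i)).2
  refine ⟨f, f, fun i => Walk.nil, fun i => Walk.IsPath.nil, ?_, ?_, ?_⟩
  · intro i; exact (Finset.mem_inter.1 (hZsub (hfZ i))).1
  · intro i; exact (Finset.mem_inter.1 (hZsub (hfZ i))).2
  · intro i j hij v hv hv'
    simp only [Walk.support_nil, List.mem_singleton] at hv hv'
    exact hij (hfinj (hv' ▸ hv ▸ rfl : f i = f j))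

lemma menger_aux : ∀ (n : ℕ) (G : SimpleGraph V), G.edgeFinset.card ≤ n →
    ∀ (X Y : Finset V) (k : ℕ), (∀ S, MSep G X Y S → k ≤ S.card) → DisjPaths G k X Y := by
  intro n
  induction n with
  | zero =>
    intro G hG X Y k hk
    exact menger_base (Finset.card_eq_zero.1 (le_antisymm hG (Nat.zero_le _))) hk
  | succ n IH =>
    intro G hG X Y k hk
    by_cases hE : G.edgeFinset = ∅
    · exact menger_base hE hk
    · obtain ⟨e, he⟩ := Finset.nonempty_iff_ne_empty.2 hE
      induction e using Sym2.ind with | _ x y => ?_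
      have hxy : G.Adj x y := (G.mem_edgeSet).1 (SimpleGraph.mem_edgeFinset.1 he)
      set G' := G.deleteEdges {s(x,y)} with hG'
      have hG'sub : G'.edgeFinset ⊆ G.edgeFinset.erase s(x,y) := by
        intro a ha
        rw [SimpleGraph.mem_edgeFinset, hG', SimpleGraph.edgeSet_deleteEdges] at ha
        exact Finset.mem_erase.2 ⟨by simpa using ha.2, SimpleGraph.mem_edgeFinset.2 ha.1⟩
      have hG'card : G'.edgeFinset.card ≤ n := by
        have h1 := Finset.card_le_card hG'sub
        have h2 := Finset.card_erase_lt_of_mem he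
        omega
      by_cases hsep : ∀ S, MSep G' X Y S → k ≤ S.card
      · exact disjPaths_mono (SimpleGraph.deleteEdges_le _) (IH G' (by convert hG'card) X Y k hsep)
      · push_neg at hsep
        obtain ⟨S, hSsep, hScard⟩ := hsep
        rcases Nat.eq_zero_or_pos k with rfl | hk1
        · exact disjPaths_zero G X Y
        have IHneg : ∀ (X' M : Finset V), ¬ DisjPaths G' k X' M →
            ∃ T, MSep G' X' M T ∧ T.card < k := by
          intro X' M hnd
          by_contra hcon
          push_neg at hcon
          exact hnd (IH G' (by convert hG'card) X' M k fun T hT => hcon T hT)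
        have hB1 : DisjPaths G' k X (S ∪ {x}) ∨ DisjPaths G' k X (S ∪ {y}) := by
          by_contra hno
          push_neg at hno
          obtain ⟨Tx, hTx, hTxc⟩ := IHneg X (S ∪ {x}) hno.1
          obtain ⟨Ty, hTy, hTyc⟩ := IHneg X (S ∪ {y}) hno.2
          have := submod hSsep hTx hTy hk
          omega
        have hB2 : DisjPaths G' k Y (S ∪ {x}) ∨ DisjPaths G' k Y (S ∪ {y}) := by
          by_contra hno
          push_neg at hno
          obtain ⟨Tx, hTx, hTyc'⟩ := IHneg Y (S ∪ {x}) hno.1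
          obtain ⟨Ty, hTy, hTyc⟩ := IHneg Y (S ∪ {y}) hno.2
          have := submod (msep_symm hSsep) hTx hTy
            (fun S' hS' => hk S' (msep_symm hS'))
          omega
        -- target sets have card ≤ k
        have hcardx : (S ∪ ({x} : Finset V)).card ≤ k := by
          have := Finset.card_union_le S ({x} : Finset V)
          simp only [Finset.card_singleton] at this
          omega
        have hcardy : (S ∪ ({y} : Finset V)).card ≤ k := by
          have := Finset.card_union_le S ({y} : Finset V)
          simp only [Finset.card_singleton] at this
          omega
        have hfull : ∀ {W Z : Finset V}, MLink G' k W Z → Z.card ≤ k → Z.card = k := by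
          intro W Z L' hZ
          have h1 : (Finset.image L'.w Finset.univ).card = k := by
            rw [Finset.card_image_of_injective _ (mlink_w_inj L'), Finset.card_univ,
              Fintype.card_fin]
          have h2 : Finset.image L'.w Finset.univ ⊆ Z := by
            intro z hz
            obtain ⟨i, -, rfl⟩ := Finset.mem_image.1 hz
            exact L'.hw i
          have := Finset.card_le_card h2
          omega
        have hnot : ∀ c : V, (S ∪ ({c} : Finset V)).card = k → c ∉ S := by
          intro c hck hcS
          have heq : S ∪ ({c} : Finset V) = S := by
            apply Finset.union_eq_left.2
            simpa using hcS
          rw [heq] at hck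
          omega
        rcases hB1 with hL | hL <;> rcases hB2 with hR | hR
        · obtain ⟨L⟩ := mlink_of_disjPaths hL
          obtain ⟨R⟩ := mlink_of_disjPaths hR
          exact disjPaths_mono (SimpleGraph.deleteEdges_le _)
            (glue1 hSsep Finset.subset_union_left L R (mlink_img R hcardx))
        · obtain ⟨L⟩ := mlink_of_disjPaths hL
          obtain ⟨R⟩ := mlink_of_disjPaths hR
          exact glue2 (SimpleGraph.deleteEdges_le _) hxy
            (hnot x (hfull L hcardx)) (hnot y (hfull R hcardy)) hxy.ne hSsep L R
            (mlink_img L hcardx) (mlink_img R hcardy)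
        · obtain ⟨L⟩ := mlink_of_disjPaths hL
          obtain ⟨R⟩ := mlink_of_disjPaths hR
          exact glue2 (SimpleGraph.deleteEdges_le _) hxy.symm
            (hnot y (hfull L hcardy)) (hnot x (hfull R hcardx)) hxy.ne' hSsep L R
            (mlink_img L hcardy) (mlink_img R hcardx)
        · obtain ⟨L⟩ := mlink_of_disjPaths hL
          obtain ⟨R⟩ := mlink_of_disjPaths hR
          exact disjPaths_mono (SimpleGraph.deleteEdges_le _)
            (glue1 hSsep Finset.subset_union_left L R (mlink_img R hcardy))

lemma menger (G : SimpleGraph V) (X Y : Finset V) (k : ℕ)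
    (hk : ∀ S, MSep G X Y S → k ≤ S.card) : DisjPaths G k X Y :=
  menger_aux G.edgeFinset.card G le_rfl X Y k hk

lemma isSep_cross {G : SimpleGraph V} {P Q : Finset V} (h : IsSep G P Q) {u v : V}
    (p : G.Walk u v) (hu : u ∈ P) (hv : v ∉ P) : ∃ z ∈ p.support, z ∈ P ∧ z ∈ Q := by
  induction p with
  | nil => exact absurd hu hv
  | @cons a b c hadj q ih =>
    by_cases hb : b ∈ P
    · obtain ⟨z, hz, hzP, hzQ⟩ := ih hb hv
      exact ⟨z, by simp [Walk.support_cons, hz], hzP, hzQ⟩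
    · by_cases haQ : a ∈ Q
      · exact ⟨a, by simp, hu, haQ⟩
      · exfalso
        have hbQ : b ∈ Q := by
          have hmem : b ∈ P ∪ Q := by rw [h.1]; exact Finset.mem_univ b
          rcases Finset.mem_union.1 hmem with h' | h'
          exacts [absurd h' hb, h']
        exact h.2 a b hu haQ hbQ hb hadj


end MG

open SimpleGraph MG in
/-- Menger-type statement: if every separation nested between (A,B) and (A',B') has
order at least k, then there are k vertex-disjoint paths from A to B'. -/
theorem stmt_10 {V : Type} [Fintype V] [DecidableEq V] (G : SimpleGraph V)
    (A B A' B' : Finset V) (k : ℕ)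
    (hAB : IsSep G A B) (hA'B' : IsSep G A' B') (h1 : A ⊆ A') (h2 : B' ⊆ B)
    (hmin : ∀ P Q : Finset V, IsSep G P Q → A ⊆ P → Q ⊆ B → P ⊆ A' → B' ⊆ Q →
      k ≤ (P ∩ Q).card) :
    DisjPaths G k A B' := by
  classical
  set X : Finset V := A ∩ B with hX
  set Y : Finset V := A' ∩ B' with hY
  have hXA : X ⊆ A := Finset.inter_subset_left
  have hYB' : Y ⊆ B' := Finset.inter_subset_right
  have hcompl : ∀ v : V, v ∉ A → v ∈ B := by
    intro v hv
    have hmem : v ∈ A ∪ B := by rw [hAB.1]; exact Finset.mem_univ v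
    rcases Finset.mem_union.1 hmem with h' | h'
    exacts [absurd h' hv, h']
  have hcompl' : ∀ v : V, v ∉ A' → v ∈ B' := by
    intro v hv
    have hmem : v ∈ A' ∪ B' := by rw [hA'B'.1]; exact Finset.mem_univ v
    rcases Finset.mem_union.1 hmem with h' | h'
    exacts [absurd h' hv, h']
  have hksep : ∀ S, MSep G X Y S → k ≤ S.card := by
    intro S hSep
    set R : Finset V := Finset.univ.filter (· ∈ MRch G X S) with hR
    have hRmem : ∀ v : V, v ∈ R ↔ v ∈ MRch G X S := by
      intro v; simp [hR]
    have hRY : ∀ z : V, z ∈ MRch G X S → z ∈ Y → False :=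
      fun z hz hzY => mrch_not_target hSep hz hzY
    have hRA' : ∀ v : V, v ∈ MRch G X S → v ∈ A' := by
      intro v hv
      by_contra hvA'
      obtain ⟨u, hu, p, hp⟩ := hv
      have huA' : u ∈ A' := h1 (hXA hu)
      obtain ⟨z, hz, hzA', hzB'⟩ := isSep_cross hA'B' p huA' hvA'
      exact hRY z (mrch_support hu hp hz) (Finset.mem_inter.2 ⟨hzA', hzB'⟩)
    set W : Finset V := S ∩ A' ∩ B with hW
    set P : Finset V := A ∪ R ∪ W with hP
    set Q : Finset V := (A ∪ R)ᶜ ∪ W with hQ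
    have hWS : W ⊆ S := fun z hz => Finset.mem_inter.1 (Finset.mem_inter.1 hz).1 |>.1
    have hWA' : W ⊆ A' := fun z hz => (Finset.mem_inter.1 (Finset.mem_inter.1 hz).1).2
    have hWB : W ⊆ B := fun z hz => (Finset.mem_inter.1 hz).2
    -- the separation
    have hsepPQ : IsSep G P Q := by
      constructor
      · apply Finset.eq_univ_of_forall
        intro v
        by_cases hv : v ∈ A ∪ R
        · exact Finset.mem_union_left _ (Finset.mem_union_left _ hv)
        · exact Finset.mem_union_right _ (Finset.mem_union_left _ (Finset.mem_compl.2 hv))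
      · intro u v huP huQ hvQ hvP hadj
        -- unpack
        have huAR : u ∈ A ∪ R := by
          by_contra hcon
          exact huQ (Finset.mem_union_left _ (Finset.mem_compl.2 hcon))
        have huW : u ∉ W := fun hw => huQ (Finset.mem_union_right _ hw)
        have hvA : v ∉ A := fun hvA =>
          hvP (Finset.mem_union_left _ (Finset.mem_union_left _ hvA))
        have hvR : v ∉ R := fun hvR =>
          hvP (Finset.mem_union_left _ (Finset.mem_union_right _ hvR))
        have hvW : v ∉ W := fun hw => hvP (Finset.mem_union_right _ hw)
        by_cases huR : u ∈ MRch G X S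
        · -- u reachable
          by_cases hvS : v ∈ S
          · -- v in S but not in W
            by_cases hvB : v ∈ B
            · have hvA' : v ∉ A' := by
                intro hvA'
                exact hvW (Finset.mem_inter.2 ⟨Finset.mem_inter.2 ⟨hvS, hvA'⟩, hvB⟩)
              obtain ⟨u0, hu0, p0, hp0⟩ := id huR
              have hu0A' : u0 ∈ A' := h1 (hXA hu0)
              obtain ⟨z, hz, hzA', hzB'⟩ :=
                isSep_cross hA'B' (p0.append (Walk.cons hadj Walk.nil)) hu0A' hvA'
              rw [Walk.mem_support_append_iff] at hz
              rcases hz with hz | hz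
              · exact hRY z (mrch_support hu0 hp0 hz) (Finset.mem_inter.2 ⟨hzA', hzB'⟩)
              · simp only [Walk.support_cons, Walk.support_nil, List.mem_cons,
                  List.mem_singleton, List.not_mem_nil, or_false] at hz
                rcases hz with hz1 | hz1
                · exact hRY u huR (Finset.mem_inter.2 ⟨hz1 ▸ hzA', hz1 ▸ hzB'⟩)
                · exact hvA' (hz1 ▸ hzA')
            · exact hvA (by by_contra hcon; exact hvB (hcompl v hcon))
          · exact hvR ((hRmem v).2 (mrch_adj huR hadj hvS))
        · -- u not reachable, so u ∈ A
          have huA : u ∈ A := by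
            rcases Finset.mem_union.1 huAR with h' | h'
            · exact h'
            · exact absurd ((hRmem u).1 h') huR
          have hvB : v ∈ B := hcompl v hvA
          by_cases huB : u ∈ B
          · have huX : u ∈ X := Finset.mem_inter.2 ⟨huA, huB⟩
            by_cases huS : u ∈ S
            · exact huW (Finset.mem_inter.2 ⟨Finset.mem_inter.2 ⟨huS, h1 huA⟩, huB⟩)
            · exact huR (mrch_start huX huS)
          · exact hAB.2 u v huA huB hvB hvA hadj
    -- nesting facts
    have hAP : A ⊆ P := fun z hz => Finset.mem_union_left _ (Finset.mem_union_left _ hz)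
    have hQB : Q ⊆ B := by
      intro z hz
      rcases Finset.mem_union.1 hz with h' | h'
      · have : z ∉ A := fun hzA =>
          (Finset.mem_compl.1 h') (Finset.mem_union_left _ hzA)
        exact hcompl z this
      · exact hWB h'
    have hPA' : P ⊆ A' := by
      intro z hz
      rcases Finset.mem_union.1 hz with h' | h'
      · rcases Finset.mem_union.1 h' with h'' | h''
        · exact h1 h''
        · exact hRA' z ((hRmem z).1 h'')
      · exact hWA' h'
    have hB'Q : B' ⊆ Q := by
      intro z hz
      by_cases hzR : z ∈ MRch G X S
      · exact absurd (Finset.mem_inter.2 ⟨hRA' z hzR, hz⟩) (fun h => hRY z hzR h)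
      · by_cases hzA : z ∈ A
        · -- z ∈ X ∩ Y, so z ∈ S by the nil walk, hence z ∈ W
          have hzX : z ∈ X := Finset.mem_inter.2 ⟨hzA, h2 hz⟩
          have hzY : z ∈ Y := Finset.mem_inter.2 ⟨h1 hzA, hz⟩
          obtain ⟨s, hsS, hs⟩ := hSep hzX hzY Walk.nil
          simp only [Walk.support_nil, List.mem_singleton] at hs
          subst hs
          exact Finset.mem_union_right _
            (Finset.mem_inter.2 ⟨Finset.mem_inter.2 ⟨hsS, h1 hzA⟩, h2 hz⟩)
        · refine Finset.mem_union_left _ (Finset.mem_compl.2 ?_)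
          intro hcon
          rcases Finset.mem_union.1 hcon with h' | h'
          · exact hzA h'
          · exact hzR ((hRmem z).1 h')
    have hPQW : P ∩ Q ⊆ W := by
      intro z hz
      obtain ⟨hzP, hzQ⟩ := Finset.mem_inter.1 hz
      rcases Finset.mem_union.1 hzQ with h' | h'
      · rcases Finset.mem_union.1 hzP with h'' | h''
        · exact absurd h'' (Finset.mem_compl.1 h')
        · exact h''
      · exact h'
    calc k ≤ (P ∩ Q).card := hmin P Q hsepPQ hAP hQB hPA' hB'Q
      _ ≤ W.card := Finset.card_le_card hPQW
      _ ≤ S.card := Finset.card_le_card hWS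
  obtain ⟨a, b, p, hpath, ha, hb, hdisj⟩ := menger G X Y k hksep
  exact ⟨a, b, p, hpath, fun i => hXA (ha i), fun i => hYB' (hb i), hdisj⟩
end

section
/- Let w ≥ 0, let G have path-width more than w, and let (A,B) be a maximal w-good separation of G with |A ∩ B| ≤ w. Then B ∖ A is nonempty, and for every vertex u ∈ A ∩ B, u has a neighbour in B ∖ A. -/
open Finset

/-- For a maximal w-good separation of order ≤ w in a graph of path-width > w,
B∖A is nonempty and every separator vertex has a neighbour in B∖A. -/
theorem stmt_11 {V : Type} [Fintype V] [DecidableEq V] (G : SimpleGraph V) (w : ℕ)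
    (hpw : ¬ pwLE G w) (A B : Finset V) (hmax : MaxGood G w A B)
    (hcard : (A ∩ B).card ≤ w) :
    (B \ A).Nonempty ∧ ∀ u ∈ A ∩ B, ∃ v ∈ B, v ∉ A ∧ G.Adj u v := by
  obtain ⟨⟨hsep, n, W, hPD, hcards, hlast⟩, hmx⟩ := hmax
  obtain ⟨hsub, hcov, hedge, hmono⟩ := hPD
  constructor
  · by_contra h
    rw [Finset.not_nonempty_iff_eq_empty, Finset.sdiff_eq_empty_iff_subset] at h
    have hA : A = Finset.univ := by
      have h1 := hsep.1
      rwa [Finset.union_eq_left.mpr h] at h1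
    exact hpw ⟨n+1, W, ⟨fun v => hcov v (hA ▸ Finset.mem_univ v),
      fun u v huv => hedge u v huv (hA ▸ Finset.mem_univ u) (hA ▸ Finset.mem_univ v),
      hmono⟩, hcards⟩
  · intro u hu
    by_contra hc
    push_neg at hc
    have huA : u ∈ A := (Finset.mem_inter.mp hu).1
    have huB : u ∈ B := (Finset.mem_inter.mp hu).2
    set B' := B.erase u with hB'
    set W' : Fin (n+2) → Finset V := Fin.snoc W ((A ∩ B).erase u) with hW'
    have hABsub : A ∩ B' = (A ∩ B).erase u := by
      ext x; simp [hB', Finset.mem_erase, and_comm, and_left_comm]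
    have hgood : GoodSep G w A B' := by
      refine ⟨⟨?_, ?_⟩, n+1, W', ⟨?_, ?_, ?_, ?_⟩, ?_, ?_⟩
      · ext v
        simp only [Finset.mem_union, Finset.mem_univ, iff_true]
        by_cases hv : v = u
        · exact Or.inl (hv ▸ huA)
        · rcases Finset.mem_union.mp (hsep.1 ▸ Finset.mem_univ v) with h | h
          · exact Or.inl h
          · exact Or.inr (Finset.mem_erase.mpr ⟨hv, h⟩)
      · intro x y hxA hxB' hyB' hyA
        have hyB : y ∈ B := Finset.mem_of_mem_erase hyB'
        by_cases hxB : x ∈ B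
        · have hxu : x = u := by
            by_contra hne
            exact hxB' (Finset.mem_erase.mpr ⟨hne, hxB⟩)
          exact hxu ▸ hc y hyB hyA
        · exact hsep.2 x y hxA hxB hyB hyA
      · intro i
        refine Fin.lastCases ?_ ?_ i
        · rw [hW', Fin.snoc_last]
          exact fun x hx => (Finset.mem_inter.mp (Finset.mem_of_mem_erase hx)).1
        · intro j; rw [hW', Fin.snoc_castSucc]; exact hsub j
      · intro v hv
        obtain ⟨i, hi⟩ := hcov v hv
        exact ⟨i.castSucc, by rwa [hW', Fin.snoc_castSucc]⟩
      · intro x y hxy hx hy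
        obtain ⟨i, hi1, hi2⟩ := hedge x y hxy hx hy
        exact ⟨i.castSucc, by rwa [hW', Fin.snoc_castSucc], by rwa [hW', Fin.snoc_castSucc]⟩
      · intro i j k hij hjk x hx
        obtain ⟨hx1, hx2⟩ := Finset.mem_inter.mp hx
        by_cases hk : k = Fin.last (n+1)
        · subst hk
          have hxk : x ∈ (A ∩ B).erase u := by rwa [hW', Fin.snoc_last] at hx2
          by_cases hj : j = Fin.last (n+1)
          · subst hj; rwa [hW', Fin.snoc_last]
          · obtain ⟨j', rfl⟩ := Fin.exists_castSucc_eq.mpr hj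
            have hi : i ≠ Fin.last (n+1) := by
              intro h; subst h
              exact (Fin.castSucc_lt_last j').not_ge hij
            obtain ⟨i', rfl⟩ := Fin.exists_castSucc_eq.mpr hi
            have hxi : x ∈ W i' := by rwa [hW', Fin.snoc_castSucc] at hx1
            have hxl : x ∈ W (Fin.last n) := by
              rw [hlast]; exact Finset.mem_of_mem_erase hxk
            have := hmono i' j' (Fin.last n) (Fin.castSucc_le_castSucc_iff.mp hij)
              (Fin.le_last j') (Finset.mem_inter.mpr ⟨hxi, hxl⟩)
            rwa [hW', Fin.snoc_castSucc]
        · obtain ⟨k', rfl⟩ := Fin.exists_castSucc_eq.mpr hk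
          have hj : j ≠ Fin.last (n+1) := by
            intro h; subst h
            exact (Fin.castSucc_lt_last k').not_ge hjk
          obtain ⟨j', rfl⟩ := Fin.exists_castSucc_eq.mpr hj
          have hi : i ≠ Fin.last (n+1) := by
            intro h; subst h
            exact (Fin.castSucc_lt_last j').not_ge hij
          obtain ⟨i', rfl⟩ := Fin.exists_castSucc_eq.mpr hi
          have hxi : x ∈ W i' := by rwa [hW', Fin.snoc_castSucc] at hx1
          have hxk2 : x ∈ W k' := by rwa [hW', Fin.snoc_castSucc] at hx2
          have := hmono i' j' k' (Fin.castSucc_le_castSucc_iff.mp hij)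
            (Fin.castSucc_le_castSucc_iff.mp hjk) (Finset.mem_inter.mpr ⟨hxi, hxk2⟩)
          rwa [hW', Fin.snoc_castSucc]
      · intro i
        refine Fin.lastCases ?_ ?_ i
        · rw [hW', Fin.snoc_last]
          calc ((A ∩ B).erase u).card ≤ (A ∩ B).card := Finset.card_erase_le
            _ ≤ w + 1 := le_trans hcard (Nat.le_succ w)
        · intro j; rw [hW', Fin.snoc_castSucc]; exact hcards j
      · rw [hW', Fin.snoc_last, hABsub]
    have hext : Extends A B A B' := by
      refine ⟨subset_rfl, Finset.erase_subset u B, ?_⟩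
      rw [hABsub]
      exact le_trans Finset.card_erase_le le_rfl
    have := (hmx A B' hgood hext).2
    rw [hB'] at this
    rw [← this] at huB
    exact Finset.notMem_erase u B huB
end

section
/- Let H be the union of an induced subgraph G[P] of G and t vertex-disjoint paths R_1,…,R_t, each having exactly its first vertex in P and exactly its last vertex in a set S disjoint from P∖(P∩Q). If H has a path-decomposition of width at most w whose last bag is the set of last vertices of the R_i, then contracting all edges of the paths R_1,…,R_t yields a path-decomposition of G[P] of width at most w whose last bag is the set of first vertices of the R_i. -/
open Finset

lemma walk_interval {V : Type} [DecidableEq V] {H : SimpleGraph V} {n : ℕ}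
    (W : Fin n → Finset V)
    (hint : ∀ i j k : Fin n, i ≤ j → j ≤ k → W i ∩ W k ⊆ W j) :
    ∀ {x y : V} (q : H.Walk x y) (i j k : Fin n), i ≤ j → j ≤ k →
      x ∈ W i → y ∈ W k →
      (∀ u v : V, s(u, v) ∈ q.edges → ∃ l, u ∈ W l ∧ v ∈ W l) →
      ∃ s ∈ q.support, s ∈ W j := by
  intro x y q
  induction q with
  | nil =>
    intro i j k hij hjk hx hy _
    exact ⟨_, by simp, hint i j k hij hjk (Finset.mem_inter.2 ⟨hx, hy⟩)⟩
  | @cons x x' y hadj q ih =>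
    intro i j k hij hjk hx hy hedge
    obtain ⟨l, hxl, hx'l⟩ := hedge x x' (by simp)
    rcases le_total j l with hjl | hlj
    · exact ⟨x, by simp, hint i j l hij hjl (Finset.mem_inter.2 ⟨hx, hxl⟩)⟩
    · obtain ⟨s, hs, hsW⟩ := ih l j k hlj hjk hx'l hy
        (fun u v he => hedge u v (by simp [he]))
      exact ⟨s, by simp [hs], hsW⟩

/-- Contracting the disjoint linking paths turns a path-decomposition of H (the union of
G[P] and the paths) whose last bag is the set of path-ends into a path-decomposition of
G[P] whose last bag is the set of path-starts. -/
theorem stmt_19 {V : Type} [Fintype V] [DecidableEq V] (G : SimpleGraph V)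
    (P Q S : Finset V) (t w : ℕ)
    (a b : Fin t → V) (p : ∀ i, G.Walk (a i) (b i))
    (hpath : ∀ i, (p i).IsPath)
    (hdisj : ∀ i j, i ≠ j → ∀ v ∈ (p i).support, v ∉ (p j).support)
    (haP : ∀ i, a i ∈ P)
    (honlyaP : ∀ i, ∀ v ∈ (p i).support, v ∈ P → v = a i)
    (hbS : ∀ i, b i ∈ S)
    (honlybS : ∀ i, ∀ v ∈ (p i).support, v ∈ S → v = b i)
    (hSPQ : ∀ v ∈ S, v ∈ P → v ∈ Q)
    (H : SimpleGraph V)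
    (hH : ∀ u v : V, H.Adj u v ↔
      ((G.Adj u v ∧ u ∈ P ∧ v ∈ P) ∨ ∃ i, s(u, v) ∈ (p i).edges))
    {m : ℕ} (Wb : Fin (m+1) → Finset V)
    (hpd : IsPDon H (P ∪ Finset.univ.biUnion (fun i => (p i).support.toFinset)) Wb)
    (hwidth : ∀ i, (Wb i).card ≤ w + 1)
    (hlastbag : Wb (Fin.last m) = Finset.image b Finset.univ) :
    ∃ (m' : ℕ) (W' : Fin (m'+1) → Finset V), IsPDon G P W' ∧
      (∀ i, (W' i).card ≤ w + 1) ∧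
      W' (Fin.last m') = Finset.image a Finset.univ := by
  classical
  obtain ⟨hsub, hcov, hedgecov, hint⟩ := hpd
  set A := P ∪ Finset.univ.biUnion (fun i => (p i).support.toFinset) with hA
  -- support of each path is inside A
  have hsuppA : ∀ i, ∀ v ∈ (p i).support, v ∈ A := by
    intro i v hv
    exact Finset.mem_union_right _ (Finset.mem_biUnion.2
      ⟨i, Finset.mem_univ _, List.mem_toFinset.2 hv⟩)
  have hPA : ∀ v ∈ P, v ∈ A := fun v hv => Finset.mem_union_left _ hv
  -- the contraction map
  set f : V → V := fun v => if h : ∃ i, v ∈ (p i).support then a h.choose else v with hf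
  have hfpath : ∀ (i0 : Fin t) (v : V), v ∈ (p i0).support → f v = a i0 := by
    intro i0 v hv
    have h : ∃ i, v ∈ (p i).support := ⟨i0, hv⟩
    have : h.choose = i0 := by
      by_contra hne
      exact hdisj h.choose i0 hne v h.choose_spec hv
    simp only [hf, dif_pos h, this]
  have hfP : ∀ v ∈ P, f v = v := by
    intro v hv
    by_cases h : ∃ i, v ∈ (p i).support
    · rw [hfpath h.choose v h.choose_spec]
      exact (honlyaP h.choose v h.choose_spec hv).symm
    · simp only [hf, dif_neg h]
  have hfa : ∀ i0, f (a i0) = a i0 := fun i0 =>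
    hfpath i0 (a i0) (SimpleGraph.Walk.start_mem_support _)
  have hfmem : ∀ v ∈ A, f v ∈ P := by
    intro v hv
    by_cases h : ∃ i, v ∈ (p i).support
    · rw [hfpath h.choose v h.choose_spec]; exact haP _
    · simp only [hf, dif_neg h]
      rcases Finset.mem_union.1 hv with h' | h'
      · exact h'
      · exfalso
        obtain ⟨i, _, hi⟩ := Finset.mem_biUnion.1 h'
        exact h ⟨i, List.mem_toFinset.1 hi⟩
  have hfsame : ∀ u v : V, u ≠ v → f u = f v →
      ∃ i0, u ∈ (p i0).support ∧ v ∈ (p i0).support := by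
    intro u v huv hfe
    by_cases hu : ∃ i, u ∈ (p i).support
    · obtain ⟨iu, hiu⟩ := hu
      by_cases hv : ∃ i, v ∈ (p i).support
      · obtain ⟨iv, hiv⟩ := hv
        refine ⟨iu, hiu, ?_⟩
        have h1 := hfpath iu u hiu
        have h2 := hfpath iv v hiv
        have hav : a iu = a iv := by rw [← h1, ← h2, hfe]
        have heq : iu = iv := by
          by_contra hne
          exact hdisj iu iv hne (a iu) (SimpleGraph.Walk.start_mem_support _)
            (by rw [hav]; exact SimpleGraph.Walk.start_mem_support _)
        rwa [heq]
      · exfalso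
        apply hv
        have h1 := hfpath iu u hiu
        have hfv : f v = a iu := by rw [← hfe, h1]
        simp only [hf, dif_neg hv] at hfv
        exact ⟨iu, by rw [hfv]; exact SimpleGraph.Walk.start_mem_support _⟩
    · by_cases hv : ∃ i, v ∈ (p i).support
      · obtain ⟨iv, hiv⟩ := hv
        exfalso
        apply hu
        have h2 := hfpath iv v hiv
        have hfu : f u = a iv := by rw [hfe, h2]
        simp only [hf, dif_neg hu] at hfu
        exact ⟨iv, by rw [hfu]; exact SimpleGraph.Walk.start_mem_support _⟩
      · exfalso
        apply huv
        simpa only [hf, dif_neg hu, dif_neg hv] using hfe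
  refine ⟨m, fun j => (Wb j).image f, ⟨?_, ?_, ?_, ?_⟩, ?_, ?_⟩
  · -- bags ⊆ P
    intro j v hv
    obtain ⟨u, hu, rfl⟩ := Finset.mem_image.1 hv
    exact hfmem u (hsub j hu)
  · -- cover
    intro v hv
    obtain ⟨j, hj⟩ := hcov v (hPA v hv)
    exact ⟨j, Finset.mem_image.2 ⟨v, hj, hfP v hv⟩⟩
  · -- edges
    intro u v hadj hu hv
    obtain ⟨j, hju, hjv⟩ := hedgecov u v ((hH u v).2 (Or.inl ⟨hadj, hu, hv⟩))
      (hPA u hu) (hPA v hv)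
    exact ⟨j, Finset.mem_image.2 ⟨u, hju, hfP u hu⟩,
      Finset.mem_image.2 ⟨v, hjv, hfP v hv⟩⟩
  · -- interpolation
    intro i j k hij hjk x hx
    obtain ⟨hxi, hxk⟩ := Finset.mem_inter.1 hx
    obtain ⟨u, hu, hfu⟩ := Finset.mem_image.1 hxi
    obtain ⟨v, hv, hfv⟩ := Finset.mem_image.1 hxk
    by_cases huv : u = v
    · subst huv
      exact Finset.mem_image.2 ⟨u, hint i j k hij hjk (Finset.mem_inter.2 ⟨hu, hv⟩), hfu⟩
    · obtain ⟨i0, hui0, hvi0⟩ := hfsame u v huv (hfu.trans hfv.symm)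
      -- build a walk in H from u to v inside (p i0).support
      have hq0 : ∀ e ∈ ((((p i0).takeUntil u hui0).reverse).append
          ((p i0).takeUntil v hvi0)).edges, e ∈ H.edgeSet := by
        intro e he
        rw [SimpleGraph.Walk.edges_append, List.mem_append] at he
        have hep : e ∈ (p i0).edges := by
          rcases he with he | he
          · rw [SimpleGraph.Walk.edges_reverse, List.mem_reverse] at he
            exact SimpleGraph.Walk.edges_takeUntil_subset _ _ he
          · exact SimpleGraph.Walk.edges_takeUntil_subset _ _ he
        induction e with
        | h x y => exact (hH x y).2 (Or.inr ⟨i0, hep⟩)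
      set q : H.Walk u v := ((((p i0).takeUntil u hui0).reverse).append
          ((p i0).takeUntil v hvi0)).transfer H hq0 with hqdef
      have hqs : ∀ s ∈ q.support, s ∈ (p i0).support := by
        intro s hs
        rw [hqdef, SimpleGraph.Walk.support_transfer] at hs
        rcases (SimpleGraph.Walk.mem_support_append_iff _ _).1 hs with h | h
        · rw [SimpleGraph.Walk.support_reverse, List.mem_reverse] at h
          exact SimpleGraph.Walk.support_takeUntil_subset _ _ h
        · exact SimpleGraph.Walk.support_takeUntil_subset _ _ h
      have hedges : ∀ x' y' : V, s(x', y') ∈ q.edges → ∃ l, x' ∈ Wb l ∧ y' ∈ Wb l := by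
        intro x' y' he
        exact hedgecov x' y' (q.adj_of_mem_edges he)
          (hsuppA i0 x' (hqs x' (q.fst_mem_support_of_mem_edges he)))
          (hsuppA i0 y' (hqs y' (q.snd_mem_support_of_mem_edges he)))
      obtain ⟨s, hs, hsW⟩ := walk_interval Wb hint q i j k hij hjk hu hv hedges
      refine Finset.mem_image.2 ⟨s, hsW, ?_⟩
      rw [hfpath i0 s (hqs s hs), ← hfu, hfpath i0 u hui0]
  · intro j
    exact le_trans (Finset.card_image_le) (hwidth j)
  · show (Wb (Fin.last m)).image f = Finset.image a Finset.univ
    rw [hlastbag, Finset.image_image]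
    apply Finset.image_congr
    intro i _
    exact hfpath i (b i) (SimpleGraph.Walk.end_mem_support _)
end
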